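/- arXiv:0706.2918 — 5 statements merged into one kernel-verified Lean document; each statement's English description precedes it below -/
import Mathlib

section
/- The number of spanning trees of the complete bipartite graph K_{n+1,m+1} is (m+1)^n · (n+1)^m. -/
open SimpleGraph

/-- A spanning tree of a graph: a spanning subgraph which is a tree. -/
def IsSpanningTree {V : Type} (G : SimpleGraph V) (T : G.Subgraph) : Prop :=
  T.IsSpanning ∧ T.coe.IsTree


open Finset

namespace BipRoot

lemma natCard_sigma {ι : Type*} [Fintype ι] (f : ι → Type*) [∀ i, Finite (f i)] :
    Nat.card (Σ i, f i) = ∑ i, Nat.card (f i) := by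
  classical
  letI : ∀ i, Fintype (f i) := fun i => Fintype.ofFinite (f i)
  simp [Nat.card_eq_fintype_card]

lemma s0 (X m : ℕ) : ∑ c ∈ Finset.range (m+1), X^(m-c) * m.choose c = (X+1)^m := by
  rw [add_comm X 1, add_pow]
  simp

lemma s1 (X m : ℕ) :
    (X+1) * ∑ c ∈ Finset.range (m+1), c * m.choose c * X^(m-c) = m * (X+1)^m := by
  cases m with
  | zero => simp
  | succ m =>
    rw [Finset.sum_range_succ']
    simp only [Nat.zero_mul, Nat.mul_zero, add_zero, zero_mul]
    have h : ∀ i, (i+1) * (m+1).choose (i+1) * X^(m+1-(i+1)) = (m+1) * (m.choose i * X^(m-i)) := by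
      intro i
      have : Nat.succ m * m.choose i = (Nat.succ m).choose (Nat.succ i) * Nat.succ i :=
        Nat.add_one_mul_choose_eq m i
      rw [Nat.succ_eq_add_one] at this
      have h2 : (i+1) * (m+1).choose (i+1) = (m+1) * m.choose i := by
        simp only [Nat.succ_eq_add_one] at this
        rw [this, mul_comm]
      calc (i+1) * (m+1).choose (i+1) * X^(m+1-(i+1)) = ((i+1) * (m+1).choose (i+1)) * X^(m-i) := by
            congr 2
            omega
          _ = (m+1) * (m.choose i * X^(m-i)) := by rw [h2]; ring
    rw [Finset.sum_congr rfl (fun i _ => h i), ← Finset.mul_sum]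
    have : ∑ i ∈ Finset.range (m+1), m.choose i * X^(m-i)
        = ∑ i ∈ Finset.range (m+1), X^(m-i) * m.choose i := by
      apply Finset.sum_congr rfl; intros; ring
    rw [this, s0]
    ring

/-- Key algebraic identity for the induction step. Here `X+1` plays the role of `α`,
`X = i'+a` with `α = i'+1+a`, `i = i'+1`, `B = j+m = β`, `a = α - i`, `m = β - j`. -/
lemma key (a m i' j : ℕ) :
    (i'+a) * ((j+m)^a * (i'+a+1)^m * (j*a + (i'+1)*(j+m)))
    = (i'+a+1) * ∑ c ∈ Finset.range (m+1),
        (m.choose c) * ((j+m)^a * (i'+a)^(m-c) * ((j+c)*a + i'*(j+m))) := by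
  set X := i' + a with hX
  set B := j + m with hB
  have expand : ∀ c, (m.choose c) * (B^a * X^(m-c) * ((j+c)*a + i'*B))
      = B^a * ((j*a + i'*B) * (X^(m-c) * m.choose c)) + (B^a*a) * (c * m.choose c * X^(m-c)) := by
    intro c; ring
  rw [Finset.sum_congr rfl (fun c _ => expand c), Finset.sum_add_distrib,
    ← Finset.mul_sum, ← Finset.mul_sum, s0]
  have h1 : (X+1) * ((B^a*a) * ∑ c ∈ Finset.range (m+1), c * m.choose c * X^(m-c))
      = B^a * a * (m * (X+1)^m) := by
    rw [show (X+1) * ((B^a*a) * ∑ c ∈ Finset.range (m+1), c * m.choose c * X^(m-c))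
        = (B^a*a) * ((X+1) * ∑ c ∈ Finset.range (m+1), c * m.choose c * X^(m-c)) by ring, s1]
    all_goals ring
  rw [← Finset.mul_sum]
  conv_rhs => rw [mul_add]
  rw [h1]
  -- now pure polynomial identity
  rw [hX, hB]
  ring


variable {V : Type} [Fintype V] [DecidableEq V]

/-- `p` is a "good" parent function for active set `Ω`, root set `S`, bipartition `side`. -/
def Good (side : V → Bool) (Ω S : Finset V) (p : V → V) : Prop :=
  (∀ v, v ∉ Ω → p v = v) ∧ (∀ v ∈ S, p v = v) ∧
  (∀ v ∈ Ω, v ∉ S → side (p v) ≠ side v) ∧ (∀ v ∈ Ω, ∃ k, p^[k] v ∈ S)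

noncomputable def cnt (side : V → Bool) (Ω S : Finset V) : ℕ :=
  Nat.card {p : V → V // Good side Ω S p}

lemma Good.pmem {side : V → Bool} {Ω S : Finset V} {p : V → V} (hp : Good side Ω S p)
    (hS : S ⊆ Ω) {v : V} (hv : v ∈ Ω) (hvS : v ∉ S) : p v ∈ Ω := by
  by_contra hpv
  have hpvS : p v ∉ S := fun h => hpv (hS h)
  obtain ⟨k, hk⟩ := hp.2.2.2 v hv
  have hfix : p (p v) = p v := hp.1 _ hpv
  cases k with
  | zero => exact hvS hk
  | succ k =>
    rw [Function.iterate_succ_apply, Function.iterate_fixed hfix] at hk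
    exact hpvS hk

section Rec

variable (side : V → Bool) (Ω S : Finset V) (s : V)

/-- candidate children of `s`. -/
def D : Finset V := (Ω \ S).filter (fun v => side v ≠ side s)

/-- actual children of `s` under `p`. -/
def Cof (p : V → V) : Finset V := (Ω \ S).filter (fun v => p v = s)

def prune (p : V → V) : V → V := fun v => if v ∈ Cof Ω S s p then v else p v

def unprune (C : Finset V) (p : V → V) : V → V := fun v => if v ∈ C then s else p v

variable {side Ω S s}

lemma Cof_subset_D {p : V → V} (hp : Good side Ω S p) : Cof Ω S s p ⊆ D side Ω S s := by
  intro v hv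
  rw [Cof, mem_filter, mem_sdiff] at hv
  rw [D, mem_filter, mem_sdiff]
  refine ⟨⟨hv.1.1, hv.1.2⟩, ?_⟩
  have := hp.2.2.1 v hv.1.1 hv.1.2
  rw [hv.2] at this
  exact this.symm

lemma reach_fwd (hs : s ∈ S) {p : V → V} (hp : Good side Ω S p) :
    ∀ (k : ℕ) (v : V), v ≠ s → p^[k] v ∈ S →
      ∃ j, (prune Ω S s p)^[j] v ∈ S.erase s ∪ Cof Ω S s p := by
  intro k
  induction k with
  | zero =>
    intro v hvs hv
    exact ⟨0, mem_union_left _ (mem_erase.2 ⟨hvs, hv⟩)⟩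
  | succ k ih =>
    intro v hvs hk
    by_cases hv : v ∈ S.erase s ∪ Cof Ω S s p
    · exact ⟨0, hv⟩
    · rw [mem_union, mem_erase] at hv
      push_neg at hv
      have hvS : v ∉ S := fun h => absurd (hv.1 hvs) (by simp [h])
      have hvC : v ∉ Cof Ω S s p := hv.2
      have hps : p v ≠ s := by
        intro h
        by_cases hvΩ : v ∈ Ω
        · exact hvC (mem_filter.2 ⟨mem_sdiff.2 ⟨hvΩ, hvS⟩, h⟩)
        · exact hvs ((hp.1 v hvΩ) ▸ h)
      rw [Function.iterate_succ_apply] at hk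
      obtain ⟨j, hj⟩ := ih (p v) hps hk
      refine ⟨j + 1, ?_⟩
      rw [Function.iterate_succ_apply, show prune Ω S s p v = p v from if_neg hvC]
      exact hj

lemma good_fwd (hS : S ⊆ Ω) (hs : s ∈ S) {p : V → V} (hp : Good side Ω S p) :
    Good side (Ω.erase s) (S.erase s ∪ Cof Ω S s p) (prune Ω S s p) := by
  have hCS : ∀ v ∈ Cof Ω S s p, v ∉ S := by
    intro v hv
    exact (mem_sdiff.1 (mem_filter.1 hv).1).2
  refine ⟨?_, ?_, ?_, ?_⟩
  · intro v hv
    by_cases hvC : v ∈ Cof Ω S s p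
    · exact if_pos hvC
    · rw [show prune Ω S s p v = p v from if_neg hvC]
      by_cases hvs : v = s
      · subst hvs; exact hp.2.1 v hs
      · exact hp.1 v (fun h => hv (mem_erase.2 ⟨hvs, h⟩))
  · intro v hv
    rcases mem_union.1 hv with h | h
    · have hvC : v ∉ Cof Ω S s p := fun hc => hCS v hc (mem_of_mem_erase h)
      rw [show prune Ω S s p v = p v from if_neg hvC]
      exact hp.2.1 v (mem_of_mem_erase h)
    · exact if_pos h
  · intro v hv hvU
    have hvC : v ∉ Cof Ω S s p := fun h => hvU (mem_union_right _ h)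
    have hvS : v ∉ S := by
      intro h
      exact hvU (mem_union_left _ (mem_erase.2 ⟨(mem_erase.1 hv).1, h⟩))
    rw [show prune Ω S s p v = p v from if_neg hvC]
    exact hp.2.2.1 v (mem_of_mem_erase hv) hvS
  · intro v hv
    obtain ⟨k, hk⟩ := hp.2.2.2 v (mem_of_mem_erase hv)
    exact reach_fwd hs hp k v (mem_erase.1 hv).1 hk

lemma no_ghost (hS : S ⊆ Ω) (hs : s ∈ S) {C : Finset V} (hC : C ⊆ D side Ω S s)
    {p' : V → V} (hp' : Good side (Ω.erase s) (S.erase s ∪ C) p') :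
    ∀ v, v ∈ Ω → v ∉ S → v ∉ C → p' v ≠ s := by
  intro v hvΩ hvS hvC habs
  have hsC : s ∉ C := fun h => (mem_sdiff.1 (mem_filter.1 (hC h)).1).2 hs
  have hsU : s ∉ S.erase s ∪ C := by
    rw [mem_union]
    rintro (h | h)
    · exact (mem_erase.1 h).1 rfl
    · exact hsC h
  have hvs : v ≠ s := fun h => hvS (h ▸ hs)
  have hfix : p' s = s := hp'.1 s (fun h => (mem_erase.1 h).1 rfl)
  obtain ⟨k, hk⟩ := hp'.2.2.2 v (mem_erase.2 ⟨hvs, hvΩ⟩)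
  cases k with
  | zero =>
    rcases mem_union.1 hk with h | h
    · exact hvS (mem_of_mem_erase h)
    · exact hvC h
  | succ k =>
    rw [Function.iterate_succ_apply, habs, Function.iterate_fixed hfix] at hk
    exact hsU hk

lemma reach_bwd (hs : s ∈ S) {C : Finset V} (hC : C ⊆ D side Ω S s) {p' : V → V} :
    ∀ (k : ℕ) (v : V), p'^[k] v ∈ S.erase s ∪ C →
      ∃ j, (unprune s C p')^[j] v ∈ S := by
  intro k
  induction k with
  | zero =>
    intro v hv
    rw [Function.iterate_zero_apply] at hv
    rcases mem_union.1 hv with h | h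
    · exact ⟨0, mem_of_mem_erase h⟩
    · exact ⟨1, by rw [Function.iterate_one, unprune, if_pos h]; exact hs⟩
  | succ k ih =>
    intro v hk
    by_cases hvC : v ∈ C
    · exact ⟨1, by rw [Function.iterate_one, unprune, if_pos hvC]; exact hs⟩
    · by_cases hvS : v ∈ S
      · exact ⟨0, hvS⟩
      · rw [Function.iterate_succ_apply] at hk
        obtain ⟨j, hj⟩ := ih (p' v) hk
        refine ⟨j + 1, ?_⟩
        rw [Function.iterate_succ_apply, show unprune s C p' v = p' v from if_neg hvC]
        exact hj

lemma good_bwd (hS : S ⊆ Ω) (hs : s ∈ S) {C : Finset V} (hC : C ⊆ D side Ω S s)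
    {p' : V → V} (hp' : Good side (Ω.erase s) (S.erase s ∪ C) p') :
    Good side Ω S (unprune s C p') := by
  have hCΩS : ∀ v ∈ C, v ∈ Ω ∧ v ∉ S := by
    intro v hv
    have := (mem_filter.1 (hC hv)).1
    exact ⟨(mem_sdiff.1 this).1, (mem_sdiff.1 this).2⟩
  refine ⟨?_, ?_, ?_, ?_⟩
  · intro v hv
    have hvC : v ∉ C := fun h => hv (hCΩS v h).1
    rw [show unprune s C p' v = p' v from if_neg hvC]
    exact hp'.1 v (fun h => hv (mem_of_mem_erase h))
  · intro v hv
    have hvC : v ∉ C := fun h => (hCΩS v h).2 hv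
    rw [show unprune s C p' v = p' v from if_neg hvC]
    by_cases hvs : v = s
    · subst hvs; exact hp'.1 v (fun h => (mem_erase.1 h).1 rfl)
    · exact hp'.2.1 v (mem_union_left _ (mem_erase.2 ⟨hvs, hv⟩))
  · intro v hvΩ hvS
    by_cases hvC : v ∈ C
    · rw [show unprune s C p' v = s from if_pos hvC]
      have := (mem_filter.1 (hC hvC)).2
      simp only [ne_eq] at this ⊢
      exact fun h => this h.symm
    · rw [show unprune s C p' v = p' v from if_neg hvC]
      have hvs : v ≠ s := fun h => hvS (h ▸ hs)
      refine hp'.2.2.1 v (mem_erase.2 ⟨hvs, hvΩ⟩) ?_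
      rw [mem_union]
      rintro (h | h)
      · exact hvS (mem_of_mem_erase h)
      · exact hvC h
  · intro v hvΩ
    by_cases hvs : v = s
    · exact ⟨0, by rw [Function.iterate_zero_apply, hvs]; exact hs⟩
    · obtain ⟨k, hk⟩ := hp'.2.2.2 v (mem_erase.2 ⟨hvs, hvΩ⟩)
      exact reach_bwd hs hC k v hk

lemma sigmaSubtypeExt {ι : Type*} {γ : Type*} {P : ι → γ → Prop} :
    ∀ {x y : Σ i : ι, {c : γ // P i c}}, x.1 = y.1 → x.2.1 = y.2.1 → x = y := by
  rintro ⟨i, c, hc⟩ ⟨j, d, hd⟩ h1 h2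
  dsimp at h1 h2
  subst h1; subst h2; rfl

noncomputable def recEquiv (hS : S ⊆ Ω) (hs : s ∈ S) :
    {p : V → V // Good side Ω S p} ≃
      (Σ C : {C : Finset V // C ∈ (D side Ω S s).powerset},
        {p : V → V // Good side (Ω.erase s) (S.erase s ∪ C.1) p}) where
  toFun p := ⟨⟨Cof Ω S s p.1, mem_powerset.2 (Cof_subset_D p.2)⟩,
    ⟨prune Ω S s p.1, good_fwd hS hs p.2⟩⟩
  invFun q := ⟨unprune s q.1.1 q.2.1, good_bwd hS hs (mem_powerset.1 q.1.2) q.2.2⟩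
  left_inv p := by
    apply Subtype.ext
    funext v
    dsimp only
    by_cases hv : v ∈ Cof Ω S s p.1
    · rw [unprune, if_pos hv]
      exact ((mem_filter.1 hv).2).symm
    · rw [unprune, if_neg hv, prune, if_neg hv]
  right_inv q := by
    obtain ⟨⟨C, hC⟩, ⟨p', hp'⟩⟩ := q
    have hCD : C ⊆ D side Ω S s := mem_powerset.1 hC
    have hgood := good_bwd hS hs hCD hp'
    have hCeq : Cof Ω S s (unprune s C p') = C := by
      ext v
      rw [Cof, mem_filter, mem_sdiff]
      constructor
      · rintro ⟨⟨hvΩ, hvS⟩, hv⟩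
        by_contra hvC
        rw [unprune, if_neg hvC] at hv
        exact no_ghost hS hs hCD hp' v hvΩ hvS hvC hv
      · intro hvC
        have h := (mem_filter.1 (hCD hvC)).1
        exact ⟨mem_sdiff.1 h, if_pos hvC⟩
    apply sigmaSubtypeExt
    · exact Subtype.ext hCeq
    · dsimp only
      funext v
      by_cases hv : v ∈ C
      · rw [prune, hCeq, if_pos hv]
        exact (hp'.2.1 v (mem_union_right _ hv)).symm
      · rw [prune, hCeq, if_neg hv, unprune, if_neg hv]

lemma card_rec (hS : S ⊆ Ω) (hs : s ∈ S) :
    cnt side Ω S = ∑ C ∈ (D side Ω S s).powerset, cnt side (Ω.erase s) (S.erase s ∪ C) := by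
  rw [cnt, Nat.card_congr (recEquiv hS hs), natCard_sigma]
  rw [← Finset.sum_coe_sort ((D side Ω S s).powerset)
    (fun C => cnt side (Ω.erase s) (S.erase s ∪ C))]
  rfl

end Rec

section Main

variable {V : Type} [Fintype V] [DecidableEq V]

lemma good_id (side : V → Bool) (Ω : Finset V) : Good side Ω Ω id :=
  ⟨fun _ _ => rfl, fun _ _ => rfl, fun v hv hnv => absurd hv hnv, fun v hv => ⟨0, hv⟩⟩

lemma cnt_self (side : V → Bool) (Ω : Finset V) : cnt side Ω Ω = 1 := by
  rw [cnt, Nat.card_eq_one_iff_unique]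
  constructor
  · constructor
    intro p q
    apply Subtype.ext
    funext v
    by_cases hv : v ∈ Ω
    · rw [p.2.2.1 v hv, q.2.2.1 v hv]
    · rw [p.2.1 v hv, q.2.1 v hv]
  · exact ⟨⟨id, good_id side Ω⟩⟩

lemma cnt_empty_root (side : V → Bool) (Ω : Finset V) (hΩ : Ω.Nonempty) :
    cnt side Ω ∅ = 0 := by
  rw [cnt, Nat.card_eq_zero]
  left
  constructor
  intro p
  obtain ⟨v, hv⟩ := hΩ
  obtain ⟨k, hk⟩ := p.2.2.2.2 v hv
  exact absurd hk (Finset.notMem_empty _)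

lemma bool_ne_not (a b : Bool) : ((!a) ≠ (!b)) ↔ (a ≠ b) := by
  cases a <;> cases b <;> simp

lemma good_not (side : V → Bool) (Ω S : Finset V) (p : V → V) :
    Good (fun v => !side v) Ω S p ↔ Good side Ω S p := by
  unfold Good
  refine and_congr Iff.rfl (and_congr Iff.rfl (and_congr ?_ Iff.rfl))
  refine forall_congr' fun v => ?_
  refine imp_congr Iff.rfl (imp_congr Iff.rfl ?_)
  exact bool_ne_not _ _

lemma cnt_not (side : V → Bool) (Ω S : Finset V) :
    cnt (fun v => !side v) Ω S = cnt side Ω S := by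
  rw [cnt, cnt]
  exact Nat.card_congr (Equiv.subtypeEquivRight (fun p => good_not side Ω S p))

/-- The statement of the master formula. -/
def Fml (side : V → Bool) (Ω S : Finset V) : Prop :=
  (Ω.filter (fun v => side v)).card * (Ω.filter (fun v => ¬ side v)).card * cnt side Ω S
  = (Ω.filter (fun v => ¬ side v)).card ^
      ((Ω.filter (fun v => side v)).card - (S.filter (fun v => side v)).card)
    * (Ω.filter (fun v => side v)).card ^
      ((Ω.filter (fun v => ¬ side v)).card - (S.filter (fun v => ¬ side v)).card)
    * ((S.filter (fun v => ¬ side v)).card *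
        ((Ω.filter (fun v => side v)).card - (S.filter (fun v => side v)).card)
       + (S.filter (fun v => side v)).card * (Ω.filter (fun v => ¬ side v)).card)

end Main

section Step

variable {V : Type} [Fintype V] [DecidableEq V]

lemma step (side : V → Bool) (Ω S : Finset V) (s : V) (hS : S ⊆ Ω) (hs : s ∈ S)
    (hside : side s = true)
    (ih : ∀ S' : Finset V, S' ⊆ Ω.erase s → Fml side (Ω.erase s) S') :
    Fml side Ω S := by
  classical
  unfold Fml
  set α := (Ω.filter (fun v => side v)).card with hα
  set β := (Ω.filter (fun v => ¬ side v)).card with hβ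
  set i := (S.filter (fun v => side v)).card with hi
  set j := (S.filter (fun v => ¬ side v)).card with hj
  have hsf : s ∈ Ω.filter (fun v => side v) := mem_filter.2 ⟨hS hs, by simp [hside]⟩
  have hsif : s ∈ S.filter (fun v => side v) := mem_filter.2 ⟨hs, by simp [hside]⟩
  have hi1 : 1 ≤ i := Finset.card_pos.2 ⟨s, hsif⟩
  have hiα : i ≤ α := Finset.card_le_card (filter_subset_filter _ hS)
  have hjβ : j ≤ β := Finset.card_le_card (filter_subset_filter _ hS)
  have hα1 : 1 ≤ α := Finset.card_pos.2 ⟨s, hsf⟩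
  by_cases hA : α = 1
  · -- degenerate case: only one vertex on s's side
    have hi1' : i = 1 := le_antisymm (hA ▸ hiα) hi1
    have hfil : Ω.filter (fun v => side v) = {s} := by
      obtain ⟨x, hx⟩ := Finset.card_eq_one.1
        (show (Ω.filter (fun v => (side v : Prop))).card = 1 from by rw [← hα]; exact hA)
      rw [hx] at hsf ⊢
      rw [Finset.mem_singleton.1 hsf]
    have hsidev : ∀ v, v ∈ Ω → v ∉ S → ¬ (side v : Prop) := by
      intro v hvΩ hvS h
      have : v ∈ Ω.filter (fun v => side v) := mem_filter.2 ⟨hvΩ, h⟩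
      rw [hfil, Finset.mem_singleton] at this
      exact hvS (this ▸ hs)
    have keyv : ∀ (q : V → V), Good side Ω S q → ∀ v, v ∈ Ω → v ∉ S → q v = s := by
      intro q hq v hvΩ hvS
      have h1 : q v ∈ Ω := hq.pmem hS hvΩ hvS
      have h2 : side (q v) ≠ side v := hq.2.2.1 v hvΩ hvS
      have h3 : (side (q v) : Prop) := by
        have hv := hsidev v hvΩ hvS
        simp only [Bool.not_eq_true] at hv
        rw [hv] at h2
        simpa using h2
      have : q v ∈ Ω.filter (fun v => side v) := mem_filter.2 ⟨h1, h3⟩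
      rw [hfil, Finset.mem_singleton] at this
      exact this
    have hcnt : cnt side Ω S = 1 := by
      rw [cnt, Nat.card_eq_one_iff_unique]
      constructor
      · constructor
        intro p q
        apply Subtype.ext
        funext v
        by_cases hvΩ : v ∈ Ω
        · by_cases hvS : v ∈ S
          · rw [p.2.2.1 v hvS, q.2.2.1 v hvS]
          · rw [keyv p.1 p.2 v hvΩ hvS, keyv q.1 q.2 v hvΩ hvS]
        · rw [p.2.1 v hvΩ, q.2.1 v hvΩ]
      · refine ⟨⟨fun v => if v ∈ Ω \ S then s else v, ?_, ?_, ?_, ?_⟩⟩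
        · intro v hv
          dsimp only
          rw [if_neg (fun h => hv (mem_sdiff.1 h).1)]
        · intro v hv
          dsimp only
          rw [if_neg (fun h => (mem_sdiff.1 h).2 hv)]
        · intro v hvΩ hvS
          dsimp only
          rw [if_pos (mem_sdiff.2 ⟨hvΩ, hvS⟩)]
          have hv := hsidev v hvΩ hvS
          simp only [Bool.not_eq_true] at hv
          rw [hside, hv]
          simp
        · intro v hvΩ
          by_cases hvS : v ∈ S
          · exact ⟨0, hvS⟩
          · refine ⟨1, ?_⟩
            rw [Function.iterate_one]
            rw [if_pos (mem_sdiff.2 ⟨hvΩ, hvS⟩)]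
            exact hs
    rw [hcnt, hA, hi1']
    simp [Nat.sub_self, one_pow]
  · -- main case: α ≥ 2
    have hα2 : 2 ≤ α := by omega
    have hD : D side Ω S s
        = Ω.filter (fun v => ¬ side v) \ S.filter (fun v => ¬ side v) := by
      rw [D]
      ext v
      simp only [mem_filter, mem_sdiff, hside, ne_eq]
      constructor
      · rintro ⟨⟨h1, h2⟩, h3⟩
        simp only [Bool.not_eq_true] at h3 ⊢
        refine ⟨⟨h1, by simp [h3]⟩, fun hf => h2 hf.1⟩
      · rintro ⟨⟨h1, h2⟩, h3⟩
        simp only [Bool.not_eq_true] at h2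
        exact ⟨⟨h1, fun hvS => h3 ⟨hvS, by simp [h2]⟩⟩, by simp [h2]⟩
    have hDcard : (D side Ω S s).card = β - j := by
      rw [hD, card_sdiff_of_subset (filter_subset_filter _ hS)]
    set m := β - j with hm
    set a := α - i with ha
    set g : ℕ → ℕ := fun c => β^a * (α-1)^(m-c) * ((j+c)*a + (i-1)*β) with hg
    have perC : ∀ C ∈ (D side Ω S s).powerset,
        (α - 1) * β * cnt side (Ω.erase s) (S.erase s ∪ C) = g C.card := by
      intro C hC
      have hCD : C ⊆ D side Ω S s := mem_powerset.1 hC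
      have hCno : ∀ v ∈ C, ¬(side v : Prop) ∧ v ∈ Ω ∧ v ∉ S := by
        intro v hv
        have h := hCD hv
        rw [hD, mem_sdiff, mem_filter, mem_filter] at h
        exact ⟨h.1.2, h.1.1, fun hvS => h.2 ⟨hvS, h.1.2⟩⟩
      have hCm : C.card ≤ m := hDcard ▸ Finset.card_le_card hCD
      have hsub : S.erase s ∪ C ⊆ Ω.erase s := by
        apply Finset.union_subset (Finset.erase_subset_erase _ hS)
        intro v hv
        refine Finset.mem_erase.2 ⟨?_, (hCno v hv).2.1⟩
        intro h
        have := (hCno v hv).1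
        rw [h, hside] at this
        simp at this
      have hthis := ih (S.erase s ∪ C) hsub
      unfold Fml at hthis
      have e1 : ((Ω.erase s).filter (fun v => side v)).card = α - 1 := by
        rw [Finset.filter_erase, Finset.card_erase_of_mem hsf]
      have e2 : ((Ω.erase s).filter (fun v => ¬ side v)).card = β := by
        rw [Finset.filter_erase, Finset.erase_eq_of_notMem]
        intro h
        exact (mem_filter.1 h).2 (by simp [hside])
      have eC : C.filter (fun v => side v) = ∅ := by
        rw [Finset.filter_eq_empty_iff]
        exact fun v hv => (hCno v hv).1
      have eC2 : C.filter (fun v => ¬ side v) = C :=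
        Finset.filter_true_of_mem (fun v hv => (hCno v hv).1)
      have e3 : ((S.erase s ∪ C).filter (fun v => side v)).card = i - 1 := by
        rw [Finset.filter_union, Finset.filter_erase, eC, Finset.union_empty,
          Finset.card_erase_of_mem hsif]
      have e4 : ((S.erase s ∪ C).filter (fun v => ¬ side v)).card = j + C.card := by
        rw [Finset.filter_union, Finset.filter_erase, eC2, Finset.erase_eq_of_notMem
          (show s ∉ S.filter (fun v => ¬ (side v : Prop)) from
            fun h => (mem_filter.1 h).2 (by simp [hside]))]
        rw [Finset.card_union_of_disjoint]
        rw [Finset.disjoint_left]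
        intro v hv
        exact fun hvC => (hCno v hvC).2.2 (mem_filter.1 hv).1
      rw [e1, e2, e3, e4] at hthis
      have x1 : α - 1 - (i - 1) = a := by omega
      have x2 : β - (j + C.card) = m - C.card := by omega
      rw [x1, x2] at hthis
      rw [hthis, hg]
    have hrec := card_rec (side := side) hS hs
    have step1 : (α - 1) * β * cnt side Ω S = ∑ C ∈ (D side Ω S s).powerset, g C.card := by
      rw [hrec, Finset.mul_sum]
      exact Finset.sum_congr rfl perC
    have step2 : ∑ C ∈ (D side Ω S s).powerset, g C.card
        = ∑ c ∈ Finset.range (m+1), m.choose c * g c := by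
      rw [Finset.sum_powerset, hDcard]
      apply Finset.sum_congr rfl
      intro c _
      rw [Finset.sum_congr rfl (fun t ht => by rw [(Finset.mem_powersetCard.1 ht).2]),
        Finset.sum_const, Finset.card_powersetCard, hDcard, smul_eq_mul]
    have hkey := key a m (i-1) j
    have hb : j + m = β := by omega
    have hα' : i - 1 + a = α - 1 := by omega
    have hαa : i - 1 + a + 1 = α := by omega
    have hii : i - 1 + 1 = i := by omega
    rw [hb, hαa, hα', hii] at hkey
    apply Nat.eq_of_mul_eq_mul_left (show 0 < α - 1 by omega)
    calc (α - 1) * (α * β * cnt side Ω S)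
        = α * ((α - 1) * β * cnt side Ω S) := by ring
      _ = α * ∑ c ∈ Finset.range (m+1), m.choose c * g c := by rw [step1, step2]
      _ = α * ∑ c ∈ Finset.range (m+1), m.choose c * (β^a * (α-1)^(m-c) * ((j+c)*a + (i-1)*β)) := rfl
      _ = (α - 1) * (β^a * α^m * (j*a + i*β)) := hkey.symm
      _ = (α - 1) * (β^a * α^m * (j*a + i*β)) := rfl

end Step

section Master

variable {V : Type} [Fintype V] [DecidableEq V]

lemma fml_swap (side : V → Bool) (Ω S : Finset V) (hS : S ⊆ Ω)
    (h : Fml (fun v => !side v) Ω S) : Fml side Ω S := by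
  unfold Fml at h ⊢
  have r1 : ∀ T : Finset V,
      T.filter (fun v => ((!side v : Bool) : Prop)) = T.filter (fun v => ¬ (side v : Prop)) := by
    intro T
    apply Finset.filter_congr
    intro v _
    simp
  have r2 : ∀ T : Finset V,
      T.filter (fun v => ¬ ((!side v : Bool) : Prop)) = T.filter (fun v => (side v : Prop)) := by
    intro T
    apply Finset.filter_congr
    intro v _
    simp
  rw [r1, r1, r2, r2, cnt_not] at h
  have hiα : (S.filter (fun v => (side v : Prop))).card ≤ (Ω.filter (fun v => (side v : Prop))).card :=
    Finset.card_le_card (filter_subset_filter _ hS)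
  have hjβ : (S.filter (fun v => ¬(side v : Prop))).card ≤ (Ω.filter (fun v => ¬(side v : Prop))).card :=
    Finset.card_le_card (filter_subset_filter _ hS)
  set α := (Ω.filter (fun v => (side v : Prop))).card
  set β := (Ω.filter (fun v => ¬(side v : Prop))).card
  set i := (S.filter (fun v => (side v : Prop))).card
  set j := (S.filter (fun v => ¬(side v : Prop))).card
  have inner : i*(β-j) + j*α = j*(α-i) + i*β := by zify [hiα, hjβ]; ring
  rw [show α*β*cnt side Ω S = β*α*cnt side Ω S from by ring, h, inner]
  ring

theorem master : ∀ (Ω : Finset V) (side : V → Bool) (S : Finset V), S ⊆ Ω → Fml side Ω S := by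
  intro Ω
  induction Ω using Finset.strongInduction with
  | _ Ω ih =>
  intro side S hS
  by_cases hSe : S = ∅
  · subst hSe
    unfold Fml
    simp only [Finset.filter_empty, Finset.card_empty, Nat.zero_mul, Nat.mul_zero, Nat.add_zero,
      Nat.zero_add, Nat.mul_zero]
    rcases Ω.eq_empty_or_nonempty with h | h
    · subst h; simp
    · rw [cnt_empty_root _ _ h]; simp
  · by_cases hSΩ : S = Ω
    · subst hSΩ
      unfold Fml
      rw [cnt_self]
      simp [Nat.sub_self]
      try ring
    · obtain ⟨s, hs⟩ := Finset.nonempty_iff_ne_empty.2 hSe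
      have ihe : ∀ (side' : V → Bool) (S' : Finset V), S' ⊆ Ω.erase s → Fml side' (Ω.erase s) S' :=
        fun side' S' h => ih (Ω.erase s) (Finset.erase_ssubset (hS hs)) side' S' h
      cases hss : side s with
      | false =>
        apply fml_swap side Ω S hS
        exact step (fun v => !side v) Ω S s hS hs (by simp [hss]) (ihe _)
      | true => exact step side Ω S s hS hs hss (ihe _)

end Master

section Specialize

theorem cnt_bip (n m : ℕ) :
    cnt (V := Fin (n+1) ⊕ Fin (m+1)) (fun v => v.isLeft) Finset.univ {Sum.inl 0}
      = (m+1)^n * (n+1)^m := by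
  classical
  have h := master (V := Fin (n+1) ⊕ Fin (m+1)) Finset.univ (fun v => v.isLeft)
    {Sum.inl 0} (Finset.subset_univ _)
  unfold Fml at h
  have hL : (Finset.univ.filter (fun v : Fin (n+1) ⊕ Fin (m+1) => (v.isLeft : Prop)))
      = Finset.univ.map ⟨Sum.inl, Sum.inl_injective⟩ := by
    ext v
    cases v <;> simp
  have hR : (Finset.univ.filter (fun v : Fin (n+1) ⊕ Fin (m+1) => ¬(v.isLeft : Prop)))
      = Finset.univ.map ⟨Sum.inr, Sum.inr_injective⟩ := by
    ext v
    cases v <;> simp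
  have hα : (Finset.univ.filter (fun v : Fin (n+1) ⊕ Fin (m+1) => (v.isLeft : Prop))).card
      = n + 1 := by rw [hL, Finset.card_map, Finset.card_univ, Fintype.card_fin]
  have hβ : (Finset.univ.filter (fun v : Fin (n+1) ⊕ Fin (m+1) => ¬(v.isLeft : Prop))).card
      = m + 1 := by rw [hR, Finset.card_map, Finset.card_univ, Fintype.card_fin]
  have hifil : (({Sum.inl 0} : Finset (Fin (n+1) ⊕ Fin (m+1))).filter
      (fun v => (v.isLeft : Prop))).card = 1 := by
    rw [Finset.filter_singleton]
    simp
  have hjfil : (({Sum.inl 0} : Finset (Fin (n+1) ⊕ Fin (m+1))).filter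
      (fun v => ¬(v.isLeft : Prop))).card = 0 := by
    rw [Finset.filter_singleton]
    simp
  rw [hα, hβ, hifil, hjfil] at h
  simp only [Nat.add_sub_cancel, Nat.sub_zero, Nat.zero_mul, Nat.one_mul, Nat.zero_add] at h
  -- h : (n+1) * (m+1) * cnt ... = (m+1)^n * (n+1)^(m+1) * (m+1)
  apply Nat.eq_of_mul_eq_mul_left (show 0 < (n+1) * (m+1) by positivity)
  rw [← Nat.mul_assoc, h]
  ring

end Specialize

section Bridge

open SimpleGraph

variable {V : Type} [Fintype V] [DecidableEq V]

/-- The "parent graph" of a function `p` with root `r`. -/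
def PG (r : V) (p : V → V) : SimpleGraph V where
  Adj v w := v ≠ w ∧ ((v ≠ r ∧ p v = w) ∨ (w ≠ r ∧ p w = v))
  symm := by
    refine ⟨?_⟩
    rintro v w ⟨h1, h2⟩
    exact ⟨h1.symm, h2.symm⟩
  loopless := ⟨fun v h => h.1 rfl⟩

lemma pg_adj {r : V} {p : V → V} {v w : V} :
    (PG r p).Adj v w ↔ v ≠ w ∧ ((v ≠ r ∧ p v = w) ∨ (w ≠ r ∧ p w = v)) := Iff.rfl

lemma edges_getElem {W : SimpleGraph V} {u v : V} (w : W.Walk u v) :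
    ∀ (i : ℕ) (hi : i < w.length),
      w.edges[i]'(by rw [SimpleGraph.Walk.length_edges]; exact hi)
        = s(w.getVert i, w.getVert (i+1)) := by
  induction w with
  | nil => intro i hi; simp at hi
  | cons h q ih =>
    intro i hi
    cases i with
    | zero => simp [SimpleGraph.Walk.edges_cons, SimpleGraph.Walk.getVert_zero,
        SimpleGraph.Walk.getVert_cons_succ]
    | succ i =>
      rw [SimpleGraph.Walk.length_cons] at hi
      simp only [SimpleGraph.Walk.edges_cons, List.getElem_cons_succ,
        SimpleGraph.Walk.getVert_cons_succ]
      exact ih i (by omega)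

lemma getVert_mem_support {W : SimpleGraph V} {u v : V} (w : W.Walk u v) (i : ℕ) :
    w.getVert i ∈ w.support := by
  induction w generalizing i with
  | nil => simp [SimpleGraph.Walk.getVert]
  | cons h q ih =>
    cases i with
    | zero => simp [SimpleGraph.Walk.getVert_zero]
    | succ i =>
      rw [SimpleGraph.Walk.getVert_cons_succ, SimpleGraph.Walk.support_cons]
      exact List.mem_cons_of_mem _ (ih i)


section PGLemmas

variable {r : V} {p : V → V} (hr : p r = r) (hreach : ∀ v, ∃ k, p^[k] v = r)

include hreach

lemma pne : ∀ v, v ≠ r → p v ≠ v := by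
  intro v hv hpv
  obtain ⟨k, hk⟩ := hreach v
  rw [Function.iterate_fixed hpv] at hk
  exact hv hk

lemma no2 {v w : V} (hv : v ≠ r) (hw : w ≠ r) (h1 : p v = w) (h2 : p w = v) : False := by
  have key : ∀ k, p^[k] v = v ∨ p^[k] v = w := by
    intro k
    induction k with
    | zero => exact Or.inl rfl
    | succ k ih =>
      rw [Function.iterate_succ_apply']
      rcases ih with h | h
      · rw [h, h1]; exact Or.inr rfl
      · rw [h, h2]; exact Or.inl rfl
  obtain ⟨k, hk⟩ := hreach v
  rcases key k with h | h
  · exact hv (h ▸ hk)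
  · exact hw (h ▸ hk)

lemma pg_adj_parent {v : V} (hv : v ≠ r) : (PG r p).Adj v (p v) :=
  ⟨fun h => pne hreach v hv h.symm, Or.inl ⟨hv, rfl⟩⟩

lemma pg_reach : ∀ (k : ℕ) (v : V), p^[k] v = r → (PG r p).Reachable v r := by
  intro k
  induction k with
  | zero => intro v hv; rw [show v = r from hv]
  | succ k ih =>
    intro v hv
    by_cases hvr : v = r
    · rw [hvr]
    · rw [Function.iterate_succ_apply] at hv
      exact ((pg_adj_parent hreach hvr).reachable).trans (ih (p v) hv)

lemma pg_connected : (PG r p).Connected := by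
  rw [connected_iff]
  refine ⟨fun v w => ?_, ⟨r⟩⟩
  obtain ⟨k, hk⟩ := hreach v
  obtain ⟨l, hl⟩ := hreach w
  exact (pg_reach hreach k v hk).trans (pg_reach hreach l w hl).symm

/-- level function: minimal number of steps to the root -/
noncomputable def dp (hreach : ∀ v, ∃ k, p^[k] v = r) (v : V) : ℕ := Nat.find (hreach v)

lemma dp_parent {v : V} (hv : v ≠ r) : dp hreach v = dp hreach (p v) + 1 := by
  have hspec : p^[dp hreach v] v = r := Nat.find_spec (hreach v)
  have h0 : dp hreach v ≠ 0 := by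
    intro h
    rw [h] at hspec
    exact hv hspec
  obtain ⟨k, hk⟩ : ∃ k, dp hreach v = k + 1 := ⟨dp hreach v - 1, by omega⟩
  have h1 : dp hreach (p v) ≤ k := by
    apply Nat.find_le
    rw [← Function.iterate_succ_apply]
    rw [hk] at hspec
    exact hspec
  have h2 : dp hreach v ≤ dp hreach (p v) + 1 := by
    apply Nat.find_le
    rw [Function.iterate_succ_apply]
    exact Nat.find_spec (hreach (p v))
  omega

lemma dp_adj {v w : V} (h : (PG r p).Adj v w) :
    dp hreach v = dp hreach w + 1 ∨ dp hreach w = dp hreach v + 1 := by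
  rcases h.2 with ⟨hv, hp⟩ | ⟨hw, hp⟩
  · left; rw [← hp]; exact dp_parent hreach hv
  · right; rw [← hp]; exact dp_parent hreach hw

lemma pg_acyclic : (PG r p).IsAcyclic := by
  intro x c hc
  -- find a vertex of maximal level on the cycle
  obtain ⟨u, hu, hmax⟩ := Finset.exists_max_image c.support.toFinset (dp hreach)
    ⟨x, by simp [SimpleGraph.Walk.start_mem_support]⟩
  rw [List.mem_toFinset] at hu
  set c' := c.rotate u hu with hc'def
  have hc' : c'.IsCycle := hc.rotate hu
  have hmax' : ∀ y ∈ c'.support, dp hreach y ≤ dp hreach u := by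
    intro y hy
    rw [SimpleGraph.Walk.support_eq_cons] at hy
    rcases List.mem_cons.1 hy with h | h
    · rw [h]
    · have : y ∈ c.support.tail := (SimpleGraph.Walk.support_rotate c u hu).mem_iff.1 h
      exact hmax y (List.mem_toFinset.2 (List.mem_of_mem_tail this))
  have hlen : 3 ≤ c'.length := hc'.three_le_length
  set v₁ := c'.getVert 1 with hv₁
  set w₁ := c'.getVert (c'.length - 1) with hw₁
  have hadj1 : (PG r p).Adj u v₁ := by
    have := c'.adj_getVert_succ (i := 0) (by omega)
    rwa [SimpleGraph.Walk.getVert_zero] at this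
  have hadj2 : (PG r p).Adj w₁ u := by
    have := c'.adj_getVert_succ (i := c'.length - 1) (by omega)
    rwa [show c'.length - 1 + 1 = c'.length by omega, SimpleGraph.Walk.getVert_length] at this
  have hv₁s : v₁ ∈ c'.support := getVert_mem_support c' 1
  have hw₁s : w₁ ∈ c'.support := getVert_mem_support c' _
  -- both neighbours are the parent of u
  have hpu1 : p u = v₁ := by
    rcases hadj1.2 with ⟨_, h⟩ | ⟨hv₁r, h⟩
    · exact h
    · exfalso
      have := dp_parent hreach hv₁r
      rw [h] at this
      have := hmax' v₁ hv₁s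
      omega
  have hpu2 : p u = w₁ := by
    rcases hadj2.2 with ⟨hw₁r, h⟩ | ⟨_, h⟩
    · exfalso
      have := dp_parent hreach hw₁r
      rw [h] at this
      have := hmax' w₁ hw₁s
      omega
    · exact h
  -- but the first and last edges of the cycle are distinct
  have hnodup : c'.edges.Nodup := hc'.isCircuit.isTrail.edges_nodup
  have he1 : c'.edges[0]'(by rw [SimpleGraph.Walk.length_edges]; omega) = s(u, v₁) := by
    have := edges_getElem c' 0 (by omega)
    rwa [SimpleGraph.Walk.getVert_zero] at this
  have he2 : c'.edges[c'.length - 1]'(by rw [SimpleGraph.Walk.length_edges]; omega)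
      = s(w₁, u) := by
    have := edges_getElem c' (c'.length - 1) (by omega)
    rwa [show c'.length - 1 + 1 = c'.length by omega, SimpleGraph.Walk.getVert_length] at this
  have heq : c'.edges[0]'(by rw [SimpleGraph.Walk.length_edges]; omega)
      = c'.edges[c'.length - 1]'(by rw [SimpleGraph.Walk.length_edges]; omega) := by
    rw [he1, he2, ← hpu1, ← hpu2, Sym2.eq_swap]
  have := (hnodup.getElem_inj_iff).1 heq
  omega

lemma pg_isTree : (PG r p).IsTree :=
  ⟨pg_connected hreach, pg_acyclic hreach⟩

end PGLemmas

/-- Injectivity of `p ↦ PG r p`. -/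
lemma pg_injective {r : V} {p q : V → V}
    (hrp : p r = r) (hrq : q r = r)
    (hp : ∀ v, ∃ k, p^[k] v = r) (hq : ∀ v, ∃ k, q^[k] v = r)
    (h : PG r p = PG r q) : p = q := by
  have key : ∀ (n : ℕ) (v : V), dp hp v ≤ n → p v = q v := by
    intro n
    induction n with
    | zero =>
      intro v hv
      have hspec : p^[dp hp v] v = r := Nat.find_spec (hp v)
      rw [Nat.le_zero.1 hv] at hspec
      have hvr : v = r := by simpa using hspec
      rw [hvr, hrp, hrq]
    | succ n ih =>
      intro v hv
      by_cases hvr : v = r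
      · rw [hvr, hrp, hrq]
      · have hq_adj : (PG r p).Adj v (q v) := by
          rw [h]
          exact pg_adj_parent hq hvr
        rcases hq_adj.2 with ⟨_, hpv⟩ | ⟨hqvr, hpqv⟩
        · exact hpv
        · -- p (q v) = v and q v ≠ r; get symmetric info
          have hp_adj : (PG r q).Adj v (p v) := by
            rw [← h]
            exact pg_adj_parent hp hvr
          rcases hp_adj.2 with ⟨_, hqv⟩ | ⟨hpvr, hqpv⟩
          · exact hqv.symm
          · -- q (p v) = v, p v ≠ r : apply ih at p v
            exfalso
            have hlt : dp hp (p v) ≤ n := by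
              have := dp_parent hp hvr
              omega
            have : p (p v) = q (p v) := ih (p v) hlt
            rw [hqpv] at this
            exact no2 hp hvr hpvr rfl this
  funext v
  exact key (dp hp v) v le_rfl

/-- From a tree we can extract a parent function. -/
lemma tree_to_parent {H : SimpleGraph V} (hH : H.IsTree) (r : V) :
    ∃ p : V → V, p r = r ∧ (∀ v, v ≠ r → H.Adj v (p v)) ∧
      (∀ v, ∃ k, p^[k] v = r) ∧ PG r p = H := by
  classical
  have hconn : H.Connected := hH.isConnected
  have hdpos : ∀ v : V, v ≠ r → H.dist v r ≠ 0 := by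
    intro v hv h
    exact hv ((hconn.dist_eq_zero_iff).1 h)
  choose W hW using fun (v : {v : V // v ≠ r}) =>
    SimpleGraph.exists_walk_of_dist_ne_zero (hdpos v.1 v.2)
  set p : V → V := fun v => if h : v = r then r else (W ⟨v, h⟩).getVert 1 with hp
  have hadj : ∀ v, v ≠ r → H.Adj v (p v) := by
    intro v hv
    rw [hp]
    simp only [dif_neg hv]
    have hlen : 0 < (W ⟨v, hv⟩).length := by
      rw [hW ⟨v, hv⟩]
      exact (hconn.preconnected v r).pos_dist_of_ne hv
    have := (W ⟨v, hv⟩).adj_getVert_succ (i := 0) hlen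
    rwa [SimpleGraph.Walk.getVert_zero] at this
  have hdist : ∀ v, (hv : v ≠ r) → H.dist (p v) r < H.dist v r := by
    intro v hv
    have hlen : 0 < (W ⟨v, hv⟩).length := by
      rw [hW ⟨v, hv⟩]
      exact (hconn.preconnected v r).pos_dist_of_ne hv
    have hnil : ¬ (W ⟨v, hv⟩).Nil := by
      rw [SimpleGraph.Walk.nil_iff_length_eq]
      omega
    have htl : ((W ⟨v, hv⟩).tail).length + 1 = (W ⟨v, hv⟩).length :=
      SimpleGraph.Walk.length_tail_add_one hnil
    have hle : H.dist ((W ⟨v, hv⟩).getVert 1) r ≤ ((W ⟨v, hv⟩).tail).length :=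
      SimpleGraph.dist_le _
    have : p v = (W ⟨v, hv⟩).getVert 1 := by rw [hp]; simp [dif_neg hv]
    rw [this]
    rw [← hW ⟨v, hv⟩]
    omega
  have hreach : ∀ v, ∃ k, p^[k] v = r := by
    have : ∀ (n : ℕ) (v : V), H.dist v r ≤ n → ∃ k, p^[k] v = r := by
      intro n
      induction n with
      | zero =>
        intro v hv
        refine ⟨0, ?_⟩
        simpa using (hconn.dist_eq_zero_iff).1 (Nat.le_zero.1 hv)
      | succ n ih =>
        intro v hv
        by_cases hvr : v = r
        · exact ⟨0, hvr⟩
        · obtain ⟨k, hk⟩ := ih (p v) (by have := hdist v hvr; omega)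
          exact ⟨k + 1, by rw [Function.iterate_succ_apply]; exact hk⟩
    exact fun v => this (H.dist v r) v le_rfl
  have hrr : p r = r := by rw [hp]; simp
  refine ⟨p, hrr, hadj, hreach, ?_⟩
  -- PG r p = H
  have hle : PG r p ≤ H := by
    rintro v w ⟨hne, ⟨hvr, hpv⟩ | ⟨hwr, hpw⟩⟩
    · exact hpv ▸ hadj v hvr
    · exact (hpw ▸ hadj w hwr).symm
  -- converse via bridges
  apply le_antisymm hle
  intro v w hvw
  by_contra habs
  have hbridge : H.IsBridge s(v, w) :=
    (SimpleGraph.isAcyclic_iff_forall_adj_isBridge.1 hH.IsAcyclic) hvw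
  rw [SimpleGraph.isBridge_iff] at hbridge
  apply hbridge
  have hmono : PG r p ≤ H \ SimpleGraph.fromEdgeSet {s(v, w)} := by
    intro x y hxy
    rw [SimpleGraph.sdiff_adj]
    refine ⟨hle hxy, ?_⟩
    rw [SimpleGraph.fromEdgeSet_adj]
    rintro ⟨hmem, -⟩
    rw [Set.mem_singleton_iff, Sym2.eq_iff] at hmem
    rcases hmem with ⟨rfl, rfl⟩ | ⟨rfl, rfl⟩
    · exact habs hxy
    · exact habs hxy.symm
  exact ((pg_connected hreach).preconnected v w).mono hmono

/-- transfer of `IsTree` along isomorphisms. -/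
lemma isTree_map {α β : Type} {A : SimpleGraph α} {B : SimpleGraph β}
    (φ : A ≃g B) (h : A.IsTree) : B.IsTree := by
  constructor
  · rw [SimpleGraph.connected_iff]
    constructor
    · intro x y
      have := (h.isConnected.preconnected (φ.symm x) (φ.symm y)).map φ.toHom
      simpa using this
    · exact ⟨φ h.isConnected.nonempty.some⟩
  · intro v c hc
    have hinj : Function.Injective φ.symm.toHom := φ.symm.toEquiv.injective
    exact h.IsAcyclic (c.map φ.symm.toHom)
      ((SimpleGraph.Walk.map_isCycle_iff_of_injective hinj).2 hc)

end Bridge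

section Final

open SimpleGraph

variable {n m : ℕ}

lemma cross_adj (v w : Fin (n+1) ⊕ Fin (m+1)) (h : v.isLeft ≠ w.isLeft) :
    (completeBipartiteGraph (Fin (n+1)) (Fin (m+1))).Adj v w := by
  cases v <;> cases w <;> simp_all

lemma adj_cross {v w : Fin (n+1) ⊕ Fin (m+1)}
    (h : (completeBipartiteGraph (Fin (n+1)) (Fin (m+1))).Adj v w) : v.isLeft ≠ w.isLeft := by
  cases v <;> cases w <;> simp_all

lemma good_unpack {p : Fin (n+1) ⊕ Fin (m+1) → Fin (n+1) ⊕ Fin (m+1)}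
    (hp : Good (fun v => v.isLeft) Finset.univ {Sum.inl 0} p) :
    p (Sum.inl 0) = Sum.inl 0 ∧ (∀ v, ∃ k, p^[k] v = Sum.inl 0) ∧
      PG (Sum.inl 0) p ≤ completeBipartiteGraph (Fin (n+1)) (Fin (m+1)) := by
  have hr : p (Sum.inl 0) = Sum.inl 0 := hp.2.1 _ (Finset.mem_singleton_self _)
  have hreach : ∀ v, ∃ k, p^[k] v = Sum.inl 0 := fun v =>
    (hp.2.2.2 v (Finset.mem_univ v)).imp (fun k hk => Finset.mem_singleton.1 hk)
  refine ⟨hr, hreach, ?_⟩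
  rintro v w ⟨hne, ⟨hvr, hpv⟩ | ⟨hwr, hpw⟩⟩
  · have := hp.2.2.1 v (Finset.mem_univ v) (by simpa using hvr)
    rw [hpv] at this
    exact cross_adj v w this.symm
  · have := hp.2.2.1 w (Finset.mem_univ w) (by simpa using hwr)
    rw [hpw] at this
    exact (cross_adj w v this.symm).symm

lemma spanningCoe_toSubgraph {W : Type} {G H : SimpleGraph W} (hle : H ≤ G) :
    (SimpleGraph.toSubgraph H hle).spanningCoe = H := rfl

noncomputable def FF
    (P : {p : Fin (n+1) ⊕ Fin (m+1) → Fin (n+1) ⊕ Fin (m+1) //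
        Good (fun v => v.isLeft) Finset.univ {Sum.inl 0} p}) :
    {T : (completeBipartiteGraph (Fin (n+1)) (Fin (m+1))).Subgraph //
        IsSpanningTree _ T} := by
  refine ⟨SimpleGraph.toSubgraph (PG (Sum.inl 0) P.1) (good_unpack P.2).2.2, ?_, ?_⟩
  · exact SimpleGraph.toSubgraph.isSpanning _ _
  · have hsp := SimpleGraph.toSubgraph.isSpanning _ (good_unpack P.2).2.2
    refine isTree_map (SimpleGraph.Subgraph.spanningCoeEquivCoeOfSpanning _ hsp) ?_
    rw [spanningCoe_toSubgraph]
    exact pg_isTree (good_unpack P.2).2.1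

lemma FF_bijective : Function.Bijective (FF (n := n) (m := m)) := by
  constructor
  · intro P Q h
    apply Subtype.ext
    apply pg_injective (good_unpack P.2).1 (good_unpack Q.2).1
      (good_unpack P.2).2.1 (good_unpack Q.2).2.1
    have h2 := congrArg (fun T : {T : (completeBipartiteGraph (Fin (n+1)) (Fin (m+1))).Subgraph //
        IsSpanningTree _ T} => T.1.spanningCoe) h
    simpa [FF, spanningCoe_toSubgraph] using h2
  · rintro ⟨T, hspan, htree⟩
    have hHtree : T.spanningCoe.IsTree :=
      isTree_map (SimpleGraph.Subgraph.spanningCoeEquivCoeOfSpanning T hspan).symm htree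
    obtain ⟨p, hr, hadj, hreach, hPG⟩ := tree_to_parent hHtree (Sum.inl 0)
    have hgood : Good (fun v => v.isLeft) Finset.univ {Sum.inl 0} p := by
      refine ⟨fun v hv => absurd (Finset.mem_univ v) hv, ?_, ?_, ?_⟩
      · intro v hv
        rw [Finset.mem_singleton.1 hv]
        exact hr
      · intro v _ hv
        have hadj2 := T.spanningCoe_le (hadj v (by simpa using hv))
        exact (adj_cross hadj2).symm
      · intro v _
        exact (hreach v).imp (fun k hk => Finset.mem_singleton.2 hk)
    refine ⟨⟨p, hgood⟩, ?_⟩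
    apply Subtype.ext
    apply SimpleGraph.Subgraph.ext
    · exact ((SimpleGraph.Subgraph.isSpanning_iff).1 hspan).symm
    · show (PG (Sum.inl 0) p).Adj = T.Adj
      rw [hPG]
      rfl

theorem card_spanning_trees (n m : ℕ) :
    Nat.card {T : (completeBipartiteGraph (Fin (n+1)) (Fin (m+1))).Subgraph //
        IsSpanningTree _ T} = (m+1)^n * (n+1)^m := by
  rw [← Nat.card_eq_of_bijective _ (FF_bijective (n := n) (m := m))]
  exact cnt_bip n m

end Final

end BipRoot

/-- The number of spanning trees of the complete bipartite graph `K_{n+1,m+1}`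
is `(m+1)^n · (n+1)^m`. -/
theorem stmt3 (n m : ℕ) :
    Nat.card {T : (completeBipartiteGraph (Fin (n+1)) (Fin (m+1))).Subgraph //
        IsSpanningTree _ T} = (m+1)^n * (n+1)^m :=
  BipRoot.card_spanning_trees n m
end

section
/- Let w = a^{n_0} b a^{n_1} b ··· b a^{n_m} be an ab-word with exactly m b's, and let G be the associated Ferrers graph. Then the chromatic polynomial of G in the variable t equals Σ_{r ∈ R_m} t · (t−r_0)^{n_0} · f_1 · (t−r_1)^{n_1} · f_2 ··· f_{m−1} · (t−r_{m−1})^{n_{m−1}} · f_m · (t−r_m)^{n_m+1}, where f_i = t − r_{i−1} if r_i − r_{i−1} = 1 and f_i = r_{i−1} otherwise. -/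
open SimpleGraph Finset

/-- The Ferrers graph on parts `Fin (n+1)` (the `u` vertices) and `Fin (m+1)`
(the `v` vertices), where `u i` is adjacent to `v j` iff `j < lam i`. -/
def ferrersGraph (n m : ℕ) (lam : Fin (n+1) → ℕ) :
    SimpleGraph (Fin (n+1) ⊕ Fin (m+1)) where
  Adj x y :=
    match x, y with
    | Sum.inl i, Sum.inr j => (j : ℕ) < lam i
    | Sum.inr j, Sum.inl i => (j : ℕ) < lam i
    | _, _ => False
  symm := ⟨by rintro (i|j) (i'|j') h <;> simp_all⟩
  loopless := ⟨by rintro (i|j) h <;> simp_all⟩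

/-- Reading an `ab`-word (`a = false` is a vertical step, `b = true` a horizontal
step) along the boundary of a Ferrers diagram from the bottom right corner,
`rowLensAux w c` returns the list of row lengths from the bottom row up, where
`c` is one more than the number of horizontal steps already taken. -/
def rowLensAux : List Bool → ℕ → List ℕ
  | [], c => [c]
  | true :: w, c => rowLensAux w (c+1)
  | false :: w, c => c :: rowLensAux w c

/-- The row lengths `λ_0 ≥ λ_1 ≥ ⋯ ≥ λ_n` of the Ferrers diagram of the
`ab`-word `w`, from the top row down. -/
def lamList (w : List Bool) : List ℕ := (rowLensAux w 1).reverse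

/-- The `i`-th row length of the Ferrers diagram of the `ab`-word `w`. -/
def lamW (w : List Bool) (i : ℕ) : ℕ := (lamList w).getD i 0

/-- The Ferrers graph associated to an `ab`-word `w`; it has `w.count false + 1`
vertices `u_i` and `w.count true + 1` vertices `v_j`. -/
def wordGraph (w : List Bool) :
    SimpleGraph (Fin (w.count false + 1) ⊕ Fin (w.count true + 1)) :=
  ferrersGraph _ _ (fun i => lamW w i)

/-- The number of permutations of `S_{k+1}` (`k` the length of the word `w`)
whose excedance word is `w`: position `i` (zero-indexed, `i < k`) carries the
letter `b` (`true`) exactly when `π i > i`. -/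
noncomputable def exStat (w : List Bool) : ℕ :=
  Nat.card {π : Equiv.Perm (Fin (w.length + 1)) //
    ∀ i : Fin w.length, (w.get i = true ↔ i.castSucc < π i.castSucc)}

/-- `buildWord [n_0, …, n_m] = a^{n_0} b a^{n_1} b ⋯ b a^{n_m}`. -/
def buildWord : List ℕ → List Bool
  | [] => []
  | [a] => List.replicate a false
  | a :: rest => List.replicate a false ++ true :: buildWord rest

variable {t : ℕ}

def prof {M : ℕ} (cv : Fin (M+1) → Fin t) (k : ℕ) : ℕ :=
  ((Finset.univ.filter (fun j : Fin (M+1) => (j:ℕ) ≤ k)).image cv).card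

lemma prof_zero' {M : ℕ} (cv : Fin (M+1) → Fin t) : prof cv 0 = 1 := by
  have h : (Finset.univ.filter (fun j : Fin (M+1) => (j:ℕ) ≤ 0)) = {0} := by
    ext j; simp [Nat.le_zero]
  rw [prof, h]; simp

lemma prof_le' {M : ℕ} (cv : Fin (M+1) → Fin t) (k : ℕ) : prof cv k ≤ t := by
  have := Finset.card_le_univ ((Finset.univ.filter (fun j : Fin (M+1) => (j:ℕ) ≤ k)).image cv)
  simpa [prof] using this

lemma prof_step {M : ℕ} (cv : Fin (M+1) → Fin t) (k : ℕ) :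
    prof cv (k+1) = prof cv k ∨ prof cv (k+1) = prof cv k + 1 := by
  by_cases h : k + 1 ≤ M
  · have hf : (Finset.univ.filter (fun j : Fin (M+1) => (j:ℕ) ≤ k+1))
        = insert (⟨k+1, by omega⟩ : Fin (M+1)) (Finset.univ.filter (fun j : Fin (M+1) => (j:ℕ) ≤ k)) := by
      ext j; simp [Fin.ext_iff]; omega
    rw [prof, hf, Finset.image_insert]
    by_cases hm : cv ⟨k+1, by omega⟩ ∈ (Finset.univ.filter (fun j : Fin (M+1) => (j:ℕ) ≤ k)).image cv
    · left; rw [Finset.insert_eq_self.2 hm]; rfl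
    · right; rw [Finset.card_insert_of_notMem hm]; rfl
  · left
    have hf : (Finset.univ.filter (fun j : Fin (M+1) => (j:ℕ) ≤ k+1))
        = (Finset.univ.filter (fun j : Fin (M+1) => (j:ℕ) ≤ k)) := by
      ext j; have := j.isLt; simp; omega
    rw [prof, hf]; rfl

lemma prof_snoc {M : ℕ} (cv : Fin (M+1) → Fin t) (x : Fin t) (k : ℕ) (hk : k ≤ M) :
    prof (Fin.snoc cv x : Fin (M+2) → Fin t) k = prof cv k := by
  unfold prof
  congr 1
  ext c
  simp only [Finset.mem_image, Finset.mem_filter, Finset.mem_univ, true_and]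
  constructor
  · rintro ⟨j, hj, rfl⟩
    have hlt : (j:ℕ) < M + 1 := by omega
    refine ⟨j.castLT hlt, by simpa using hj, ?_⟩
    conv_rhs => rw [← Fin.castSucc_castLT j hlt]
    rw [Fin.snoc_castSucc]
  · rintro ⟨j, hj, rfl⟩
    exact ⟨Fin.castSucc j, by simpa using hj, by rw [Fin.snoc_castSucc]⟩

lemma image_univ_eq_prof {M : ℕ} (cv : Fin (M+1) → Fin t) :
    (Finset.univ.image cv).card = prof cv M := by
  unfold prof
  congr 2
  ext j
  simp [Nat.lt_succ_iff.mp j.isLt]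

lemma prof_snoc_last {M : ℕ} (cv : Fin (M+1) → Fin t) (x : Fin t) :
    prof (Fin.snoc cv x : Fin (M+2) → Fin t) (M+1)
      = (insert x (Finset.univ.image cv)).card := by
  unfold prof
  congr 1
  ext c
  simp only [Finset.mem_image, Finset.mem_filter, Finset.mem_univ, true_and,
    Finset.mem_insert]
  constructor
  · rintro ⟨j, hj, rfl⟩
    rcases Fin.eq_castSucc_or_eq_last j with ⟨j', rfl⟩ | rfl
    · right; exact ⟨j', by rw [Fin.snoc_castSucc]⟩
    · left; rw [Fin.snoc_last]
  · rintro (rfl | ⟨j, rfl⟩)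
    · exact ⟨Fin.last (M+1), by simp, by rw [Fin.snoc_last]⟩
    · exact ⟨Fin.castSucc j, by simp, by rw [Fin.snoc_castSucc]⟩


lemma buildWord_cons_cons (a b : ℕ) (l : List ℕ) :
    buildWord (a :: b :: l) = List.replicate a false ++ true :: buildWord (b :: l) := rfl

lemma rowLensAux_replicate (a : ℕ) (w : List Bool) (c : ℕ) :
    rowLensAux (List.replicate a false ++ w) c = List.replicate a c ++ rowLensAux w c := by
  induction a with
  | zero => rfl
  | succ a ih => simpa [List.replicate_succ, rowLensAux] using ih

lemma length_rowLensAux (w : List Bool) : ∀ c, (rowLensAux w c).length = w.count false + 1 := by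
  induction w with
  | nil => intro c; rfl
  | cons b w ih =>
    intro c
    cases b <;> simp [rowLensAux, ih, List.count_cons]

lemma one_le_mem_rowLensAux (w : List Bool) : ∀ c x, x ∈ rowLensAux w c → c ≤ x := by
  induction w with
  | nil => intro c x hx; simp [rowLensAux] at hx; omega
  | cons b w ih =>
    intro c x hx
    cases b
    · simp only [rowLensAux] at hx
      rcases List.mem_cons.1 hx with rfl | hx
      · exact le_rfl
      · exact ih c x hx
    · simp only [rowLensAux] at hx
      have := ih (c+1) x hx
      omega

lemma count_true_buildWord : ∀ l : List ℕ, l ≠ [] → (buildWord l).count true + 1 = l.length := by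
  intro l
  induction l with
  | nil => intro h; exact absurd rfl h
  | cons a l ih =>
    intro _
    cases l with
    | nil => simp [buildWord, List.count_replicate]
    | cons b l =>
      rw [buildWord_cons_cons]
      have := ih (by simp)
      simp [List.count_append, List.count_cons, List.count_replicate] at this ⊢
      omega

lemma count_false_buildWord : ∀ l : List ℕ, l ≠ [] → (buildWord l).count false = l.sum := by
  intro l
  induction l with
  | nil => intro h; exact absurd rfl h
  | cons a l ih =>
    intro _
    cases l with
    | nil => simp [buildWord, List.count_replicate]
    | cons b l =>
      rw [buildWord_cons_cons]
      have := ih (by simp)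
      simp [List.count_append, List.count_cons, List.count_replicate] at this ⊢
      omega

lemma prod_map_getD (F : ℕ → ℕ) : ∀ l : List ℕ, (l.map F).prod = ∏ i : Fin l.length, F (l.getD i 0) := by
  intro l
  induction l with
  | nil => simp
  | cons a l ih =>
    rw [List.map_cons, List.prod_cons, ih, List.length_cons, Fin.prod_univ_succ]
    simp

lemma prod_map_rowLensAux (m : ℕ) : ∀ (nv : Fin (m+1) → ℕ) (c : ℕ) (F : ℕ → ℕ),
    ((rowLensAux (buildWord (List.ofFn nv)) c).map F).prod
      = F c ^ nv 0 * (∏ i : Fin m, F (c + (i:ℕ) + 1) ^ nv i.succ) * F (c + m) := by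
  induction m with
  | zero =>
    intro nv c F
    have h1 : List.ofFn nv = [nv 0] := by
      simp [List.ofFn_succ]
    rw [h1, show buildWord [nv 0] = List.replicate (nv 0) false from rfl,
      show List.replicate (nv 0) false = List.replicate (nv 0) false ++ [] by simp,
      rowLensAux_replicate]
    simp [rowLensAux, List.prod_replicate]
  | succ m ih =>
    intro nv c F
    obtain ⟨hd, tl, hrest⟩ : ∃ hd tl, List.ofFn (fun i : Fin (m+1) => nv i.succ) = hd :: tl :=
      ⟨_, _, List.ofFn_succ⟩
    rw [List.ofFn_succ, hrest, buildWord_cons_cons, ← hrest, rowLensAux_replicate,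
      List.map_append, List.prod_append, List.map_replicate, List.prod_replicate,
      show rowLensAux (true :: buildWord (List.ofFn fun i : Fin (m+1) => nv i.succ)) c
        = rowLensAux (buildWord (List.ofFn fun i : Fin (m+1) => nv i.succ)) (c+1) from rfl,
      ih (fun i => nv i.succ) (c+1) F,
      Fin.prod_univ_succ (fun i : Fin (m+1) => F (c + (i:ℕ) + 1) ^ nv i.succ)]
    have harg : ∀ i : Fin m, c + 1 + (i:ℕ) + 1 = c + ((i.succ:ℕ)) + 1 := by
      intro i; simp [Fin.val_succ]; omega
    rw [Finset.prod_congr rfl (fun (i : Fin m) _ => by rw [harg i])]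
    simp only [Fin.val_succ]
    have : c + 1 + m = c + (m + 1) := by omega
    rw [this, show c + ((0:Fin (m+1)):ℕ) + 1 = c + 1 by simp]
    simp only [mul_assoc]


/-- the fiber of the "restrict to first M+1 coords" map. -/
def fiberEquiv (M : ℕ) (r : Fin (M+2) → ℕ) (cv : Fin (M+1) → Fin t) :
    {c : {cv' : Fin (M+2) → Fin t // ∀ j : Fin (M+2), prof cv' (j:ℕ) = r j} //
        (fun i : Fin (M+1) => c.1 i.castSucc) = cv} ≃
    {x : Fin t // (∀ j : Fin (M+1), prof cv (j:ℕ) = r j.castSucc) ∧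
        (insert x (Finset.univ.image cv)).card = r (Fin.last (M+1))} where
  toFun c := by
    refine ⟨c.1.1 (Fin.last (M+1)), ?_, ?_⟩
    · intro j
      have hsnoc : (Fin.snoc cv (c.1.1 (Fin.last (M+1))) : Fin (M+2) → Fin t) = c.1.1 := by
        funext i
        rcases Fin.eq_castSucc_or_eq_last i with ⟨i', rfl⟩ | rfl
        · rw [Fin.snoc_castSucc]; exact (congrFun c.2 i').symm
        · rw [Fin.snoc_last]
      have h1 := c.1.2 j.castSucc
      rw [← hsnoc, show ((j.castSucc : Fin (M+2)) : ℕ) = (j:ℕ) from rfl,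
        prof_snoc cv _ _ (by have := j.isLt; omega)] at h1
      exact h1
    · have hsnoc : (Fin.snoc cv (c.1.1 (Fin.last (M+1))) : Fin (M+2) → Fin t) = c.1.1 := by
        funext i
        rcases Fin.eq_castSucc_or_eq_last i with ⟨i', rfl⟩ | rfl
        · rw [Fin.snoc_castSucc]; exact (congrFun c.2 i').symm
        · rw [Fin.snoc_last]
      have h1 := c.1.2 (Fin.last (M+1))
      rw [← hsnoc, show ((Fin.last (M+1) : Fin (M+2)) : ℕ) = M + 1 from rfl,
        prof_snoc_last] at h1
      exact h1
  invFun x := by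
    refine ⟨⟨Fin.snoc cv x.1, ?_⟩, ?_⟩
    · intro j
      rcases Fin.eq_castSucc_or_eq_last j with ⟨j', rfl⟩ | rfl
      · rw [show ((j'.castSucc : Fin (M+2)) : ℕ) = (j' : ℕ) by simp,
          prof_snoc cv _ _ (by have := j'.isLt; omega)]
        exact x.2.1 j'
      · rw [show ((Fin.last (M+1) : Fin (M+2)) : ℕ) = M + 1 by simp, prof_snoc_last]
        exact x.2.2
    · funext i
      simp [Fin.snoc_castSucc]
  left_inv c := by
    apply Subtype.ext
    apply Subtype.ext
    funext i
    rcases Fin.eq_castSucc_or_eq_last i with ⟨i', rfl⟩ | rfl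
    · simp only [Fin.snoc_castSucc]
      exact (congrFun c.2 i').symm
    · simp [Fin.snoc_last]
  right_inv x := by
    apply Subtype.ext
    simp [Fin.snoc_last]

lemma fiber_card (t : ℕ) : ∀ (M : ℕ) (r : Fin (M+1) → ℕ), r 0 = 1 →
    (∀ i : Fin M, r i.succ = r i.castSucc ∨ r i.succ = r i.castSucc + 1) →
    Nat.card {cv : Fin (M+1) → Fin t // ∀ j : Fin (M+1), prof cv (j:ℕ) = r j}
      = t * ∏ i : Fin M, (if r i.succ = r i.castSucc + 1 then t - r i.castSucc else r i.castSucc) := by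
  intro M
  induction M with
  | zero =>
    intro r h0 _
    have e : {cv : Fin 1 → Fin t // ∀ j : Fin 1, prof cv (j:ℕ) = r j} ≃ (Fin 1 → Fin t) := by
      refine Equiv.subtypeUnivEquiv fun cv j => ?_
      have : j = 0 := Subsingleton.elim _ _
      subst this
      simpa [h0] using prof_zero' cv
    rw [Nat.card_congr e]
    simp [Nat.card_eq_fintype_card]
  | succ M IH =>
    intro r h0 hstep
    set rr : Fin (M+1) → ℕ := fun j => r j.castSucc with hrr
    have h0' : rr 0 = 1 := by simpa [hrr] using h0
    have hstep' : ∀ i : Fin M, rr i.succ = rr i.castSucc ∨ rr i.succ = rr i.castSucc + 1 := by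
      intro i
      have := hstep i.castSucc
      simpa [hrr] using this
    classical
    have key : Nat.card {cv' : Fin (M+2) → Fin t // ∀ j : Fin (M+2), prof cv' (j:ℕ) = r j}
        = ∑ cv : Fin (M+1) → Fin t,
            Fintype.card {x : Fin t // (∀ j : Fin (M+1), prof cv (j:ℕ) = rr j) ∧
              (insert x (Finset.univ.image cv)).card = r (Fin.last (M+1))} := by
      rw [Nat.card_eq_fintype_card]
      have hfib := Fintype.sum_fiberwise
        (fun c : {cv' : Fin (M+2) → Fin t // ∀ j : Fin (M+2), prof cv' (j:ℕ) = r j} =>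
          (fun i : Fin (M+1) => c.1 i.castSucc)) (fun _ => (1:ℕ))
      have h1 : Fintype.card {cv' : Fin (M+2) → Fin t // ∀ j : Fin (M+2), prof cv' (j:ℕ) = r j}
          = ∑ c : {cv' : Fin (M+2) → Fin t // ∀ j : Fin (M+2), prof cv' (j:ℕ) = r j}, (1:ℕ) := by
        rw [← Finset.card_univ, Finset.card_eq_sum_ones]
      rw [h1, ← hfib]
      refine Finset.sum_congr rfl fun cv _ => ?_
      have h2 : Fintype.card {c : {cv' : Fin (M+2) → Fin t // ∀ j : Fin (M+2), prof cv' (j:ℕ) = r j} //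
          (fun i : Fin (M+1) => c.1 i.castSucc) = cv}
          = ∑ _c : {c : {cv' : Fin (M+2) → Fin t // ∀ j : Fin (M+2), prof cv' (j:ℕ) = r j} //
          (fun i : Fin (M+1) => c.1 i.castSucc) = cv}, (1:ℕ) := by
        rw [← Finset.card_univ, Finset.card_eq_sum_ones]
      rw [← h2, Fintype.card_congr (fiberEquiv M r cv)]
    rw [key]
    set rp : ℕ := r (Fin.last M).castSucc with hrp
    set bc : ℕ := if r (Fin.last M).succ = rp + 1 then t - rp else rp with hbc
    have hlast : (Fin.last M).succ = Fin.last (M+1) := by ext; simp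
    have step_last := hstep (Fin.last M)
    have hterm : ∀ cv : Fin (M+1) → Fin t,
        Fintype.card {x : Fin t // (∀ j : Fin (M+1), prof cv (j:ℕ) = rr j) ∧
          (insert x (Finset.univ.image cv)).card = r (Fin.last (M+1))}
        = if (∀ j : Fin (M+1), prof cv (j:ℕ) = rr j) then bc else 0 := by
      intro cv
      split_ifs with hA
      · have hS : (Finset.univ.image cv).card = rp := by
          rw [image_univ_eq_prof]
          have := hA (Fin.last M)
          simpa [hrr, hrp] using this
        rw [Fintype.card_congr (Equiv.subtypeEquivRight (fun x => and_iff_right hA))]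
        rcases step_last with hEq | hInc
        · have hcond : ∀ x : Fin t, ((insert x (Finset.univ.image cv)).card = r (Fin.last (M+1)))
              ↔ x ∈ Finset.univ.image cv := by
            intro x
            rw [← hlast, hEq]
            constructor
            · intro hcard
              by_contra hx
              rw [Finset.card_insert_of_notMem hx, hS] at hcard
              omega
            · intro hx
              rw [Finset.insert_eq_self.2 hx, hS]
          rw [Fintype.card_congr (Equiv.subtypeEquivRight hcond), Fintype.card_coe, hS]
          have hne : ¬ (r (Fin.last M).succ = rp + 1) := by rw [hEq]; omega
          rw [hbc, if_neg hne]
        · have hcond : ∀ x : Fin t, ((insert x (Finset.univ.image cv)).card = r (Fin.last (M+1)))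
              ↔ ¬ (x ∈ Finset.univ.image cv) := by
            intro x
            rw [← hlast, hInc]
            constructor
            · intro hcard hx
              rw [Finset.insert_eq_self.2 hx, hS] at hcard
              omega
            · intro hx
              rw [Finset.card_insert_of_notMem hx, hS]
          rw [Fintype.card_congr (Equiv.subtypeEquivRight hcond),
            Fintype.card_subtype_compl, Fintype.card_coe, Fintype.card_fin, hS]
          rw [hbc, if_pos hInc]
      · rw [Fintype.card_eq_zero_iff]
        exact ⟨fun x => hA x.2.1⟩
    simp only [hterm]
    rw [← Finset.sum_filter, Finset.sum_const, smul_eq_mul]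
    have hcount : (Finset.univ.filter (fun cv : Fin (M+1) → Fin t =>
          ∀ j : Fin (M+1), prof cv (j:ℕ) = rr j)).card
        = t * ∏ i : Fin M, (if rr i.succ = rr i.castSucc + 1 then t - rr i.castSucc else rr i.castSucc) := by
      rw [← Fintype.card_subtype, ← Nat.card_eq_fintype_card]
      exact IH rr h0' hstep'
    rw [hcount]
    rw [Fin.prod_univ_castSucc
      (fun i : Fin (M+1) => if r i.succ = r i.castSucc + 1 then t - r i.castSucc else r i.castSucc)]
    have hfa : ∀ i ∈ (Finset.univ : Finset (Fin M)),
        (if rr i.succ = rr i.castSucc + 1 then t - rr i.castSucc else rr i.castSucc)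
        = (if r i.castSucc.succ = r i.castSucc.castSucc + 1 then t - r i.castSucc.castSucc
            else r i.castSucc.castSucc) := by
      intro i _
      simp [hrr]
    rw [Finset.prod_congr rfl hfa]
    rw [hbc, hrp, mul_assoc]


def colEquiv (N M t : ℕ) (lam : Fin (N+1) → ℕ) :
    ((ferrersGraph N M lam).Coloring (Fin t)) ≃
      Σ cv : Fin (M+1) → Fin t, ∀ i : Fin (N+1),
        {x : Fin t // ∀ j : Fin (M+1), (j:ℕ) < lam i → x ≠ cv j} where
  toFun c := ⟨fun j => c (Sum.inr j), fun i =>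
    ⟨c (Sum.inl i), fun j h => c.valid (show (ferrersGraph N M lam).Adj (Sum.inl i) (Sum.inr j) from h)⟩⟩
  invFun p := SimpleGraph.Coloring.mk (Sum.elim (fun i => (p.2 i).1) p.1)
    (by
      rintro (i|j) (i'|j') hadj
      · exact absurd hadj (by simp [ferrersGraph])
      · exact (p.2 i).2 j' hadj
      · exact fun he => (p.2 i').2 j hadj he.symm
      · exact absurd hadj (by simp [ferrersGraph]))
  left_inv c := by
    apply DFunLike.ext
    rintro (i|j) <;> rfl
  right_inv p := rfl

lemma card_colorings (N M t : ℕ) (lam : Fin (N+1) → ℕ) :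
    Nat.card ((ferrersGraph N M lam).Coloring (Fin t)) =
      ∑ cv : Fin (M+1) → Fin t, ∏ i : Fin (N+1),
        Fintype.card {x : Fin t // ∀ j : Fin (M+1), (j:ℕ) < lam i → x ≠ cv j} := by
  rw [Nat.card_congr (colEquiv N M t lam), Nat.card_eq_fintype_card, Fintype.card_sigma]
  exact Finset.sum_congr rfl fun cv _ => Fintype.card_pi ..

lemma card_avoid {M t : ℕ} (cv : Fin (M+1) → Fin t) (l : ℕ) (hl : 1 ≤ l) :
    Fintype.card {x : Fin t // ∀ j : Fin (M+1), (j:ℕ) < l → x ≠ cv j}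
      = t - prof cv (l - 1) := by
  have hiff : ∀ x : Fin t, (∀ j : Fin (M+1), (j:ℕ) < l → x ≠ cv j) ↔
      ¬ (x ∈ (Finset.univ.filter (fun j : Fin (M+1) => (j:ℕ) ≤ l - 1)).image cv) := by
    intro x
    simp only [Finset.mem_image, Finset.mem_filter, Finset.mem_univ, true_and, not_exists,
      not_and]
    constructor
    · intro h j hj he
      exact h j (by omega) he.symm
    · intro h j hj he
      exact h j (by omega) he.symm
  rw [Fintype.card_congr (Equiv.subtypeEquivRight hiff), Fintype.card_subtype_compl,
    Fintype.card_coe, Fintype.card_fin]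
  rfl

lemma r_le_of_steps {m : ℕ} (r : Fin (m+1) → ℕ) (h0 : r 0 = 1)
    (hstep : ∀ i : Fin m, r i.succ = r i.castSucc ∨ r i.succ = r i.castSucc + 1) :
    ∀ j : Fin (m+1), r j ≤ (j:ℕ) + 1 := by
  intro j
  induction j using Fin.induction with
  | zero => simp [h0]
  | succ i ih =>
    have h1 : ((i.succ : Fin (m+1)) : ℕ) = (i:ℕ)+1 := by simp
    have h2 : ((i.castSucc : Fin (m+1)) : ℕ) = (i:ℕ) := by simp
    rw [h1]
    rw [h2] at ih
    rcases hstep i with h|h <;> omega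

lemma exists_crossing {m t : ℕ} (r : Fin (m+1) → ℕ) (h0 : r 0 = 1)
    (hstep : ∀ i : Fin m, r i.succ = r i.castSucc ∨ r i.succ = r i.castSucc + 1)
    (ht : 1 ≤ t) (j : Fin (m+1)) (hj : t < r j) :
    ∃ i : Fin m, r i.castSucc = t ∧ r i.succ = r i.castSucc + 1 := by
  classical
  set S : Finset (Fin (m+1)) := Finset.univ.filter (fun k => t < r k) with hS
  have hSne : S.Nonempty := ⟨j, by simp [hS, hj]⟩
  set k := S.min' hSne with hk'
  have hk : t < r k := by
    have := S.min'_mem hSne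
    simp [hS] at this
    exact this
  have hk0 : k ≠ 0 := by
    intro h
    rw [h, h0] at hk
    omega
  have hkv : (k:ℕ) ≠ 0 := by
    intro h
    exact hk0 (Fin.ext (by simp [h]))
  set i := k.pred hk0 with hi
  have hsucc : i.succ = k := Fin.succ_pred k hk0
  have hcs : (i.castSucc : Fin (m+1)) ∉ S := by
    intro hmem
    have hmin := S.min'_le _ hmem
    rw [← hk'] at hmin
    have hlt : i.castSucc < k := by
      rw [Fin.lt_def]
      have := congrArg Fin.val hsucc
      rw [Fin.val_succ] at this
      rw [Fin.coe_castSucc]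
      omega
    exact absurd hmin (not_le.2 hlt)
  have hle : r i.castSucc ≤ t := by
    by_contra hgt
    exact hcs (by simp [hS]; omega)
  have hik : r i.succ = r k := by rw [hsucc]
  rcases hstep i with h|h
  · omega
  · exact ⟨i, by omega, h⟩

lemma term_eq (t m : ℕ) (nv : Fin (m+1) → ℕ) (r : Fin (m+1) → ℕ) (h0 : r 0 = 1)
    (hstep : ∀ i : Fin m, r i.succ = r i.castSucc ∨ r i.succ = r i.castSucc + 1) :
    (((t * ∏ i : Fin m, (if r i.succ = r i.castSucc + 1 then t - r i.castSucc else r i.castSucc)) *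
      ((t - r 0)^(nv 0) * (∏ i : Fin m, (t - r i.succ)^(nv i.succ)) * (t - r (Fin.last m))) : ℕ) : ℤ)
      = (t : ℤ) * ((t : ℤ) - r 0) ^ (nv 0) *
          (∏ i : Fin m,
            (if r i.succ = r i.castSucc + 1 then (t : ℤ) - r i.castSucc else (r i.castSucc : ℤ)) *
            ((t : ℤ) - r i.succ) ^ (nv i.succ)) * ((t : ℤ) - r (Fin.last m)) := by
  by_cases hgood : ∀ j : Fin (m+1), r j ≤ t
  · push_cast
    rw [Nat.cast_sub (hgood 0), Nat.cast_sub (hgood (Fin.last m))]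
    have e1 : ∀ i ∈ (Finset.univ : Finset (Fin m)),
        (if r i.succ = r i.castSucc + 1 then ((t - r i.castSucc : ℕ) : ℤ) else ((r i.castSucc : ℕ) : ℤ))
        = (if r i.succ = r i.castSucc + 1 then (t:ℤ) - r i.castSucc else (r i.castSucc : ℤ)) := by
      intro i _
      split_ifs
      · rw [Nat.cast_sub (hgood _)]
      · rfl
    have e2 : ∀ i ∈ (Finset.univ : Finset (Fin m)),
        (((t - r i.succ : ℕ) : ℤ))^(nv i.succ) = ((t:ℤ) - (r i.succ :ℤ))^(nv i.succ) := by
      intro i _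
      rw [Nat.cast_sub (hgood _)]
    rw [Finset.prod_congr rfl e1, Finset.prod_congr rfl e2, Finset.prod_mul_distrib]
    ring
  · push_neg at hgood
    obtain ⟨j, hj⟩ := hgood
    by_cases ht : t = 0
    · subst ht
      simp
    · obtain ⟨i, hieq, hicond⟩ := exists_crossing r h0 hstep (by omega) j hj
      have hz : (∏ i : Fin m, (if r i.succ = r i.castSucc + 1 then t - r i.castSucc
          else r i.castSucc)) = 0 :=
        Finset.prod_eq_zero (Finset.mem_univ i) (by rw [if_pos hicond, hieq, Nat.sub_self])
      have hz2 : (∏ i : Fin m,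
          (if r i.succ = r i.castSucc + 1 then (t : ℤ) - r i.castSucc else (r i.castSucc : ℤ)) *
            ((t : ℤ) - r i.succ) ^ (nv i.succ)) = 0 :=
        Finset.prod_eq_zero (Finset.mem_univ i) (by rw [if_pos hicond, hieq]; simp)
      rw [hz, hz2]
      simp

/-- The chromatic polynomial of the Ferrers graph of the word
`w = a^{n_0} b a^{n_1} b ⋯ b a^{n_m}` is
`Σ_{r ∈ R_m} t (t−r_0)^{n_0} f_1 (t−r_1)^{n_1} ⋯ f_m (t−r_m)^{n_m+1}`, where
`f_i = t − r_{i−1}` if `r_i = r_{i−1} + 1` and `f_i = r_{i−1}` otherwise.  The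
chromatic polynomial is expressed by counting proper colorings with `t` colors
for every `t : ℕ`. -/
theorem stmt8 (m : ℕ) (nv : Fin (m+1) → ℕ) (t : ℕ) :
    (Nat.card ((wordGraph (buildWord (List.ofFn nv))).Coloring (Fin t)) : ℤ) =
      ∑ᶠ r : {r : Fin (m+1) → ℕ // r 0 = 1 ∧
          ∀ i : Fin m, r i.succ = r i.castSucc ∨ r i.succ = r i.castSucc + 1},
        (t : ℤ) * ((t : ℤ) - r.1 0) ^ (nv 0) *
          (∏ i : Fin m,
            (if r.1 i.succ = r.1 i.castSucc + 1 then (t : ℤ) - r.1 i.castSucc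
              else (r.1 i.castSucc : ℤ)) *
            ((t : ℤ) - r.1 i.succ) ^ (nv i.succ)) *
          ((t : ℤ) - r.1 (Fin.last m)) := by
  classical
  obtain ⟨w, hw⟩ : ∃ w, w = buildWord (List.ofFn nv) := ⟨_, rfl⟩
  rw [← hw]
  have hofl : (List.ofFn nv).length = m + 1 := by simp
  have hMn : w.count true = m := by
    have h := count_true_buildWord (List.ofFn nv) (by
      intro hnil
      rw [hnil] at hofl
      simp at hofl)
    rw [← hw] at h
    omega
  have hlen : (lamList w).length = w.count false + 1 := by
    rw [show lamList w = (rowLensAux w 1).reverse from rfl, List.length_reverse,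
      length_rowLensAux]
  have h1le : ∀ i : Fin (w.count false + 1), 1 ≤ lamW w (i:ℕ) := by
    intro i
    have hi : (i:ℕ) < (lamList w).length := by rw [hlen]; exact i.isLt
    have hmem : (lamList w).getD (i:ℕ) 0 ∈ lamList w := by
      rw [List.getD_eq_getElem _ _ hi]
      exact List.getElem_mem hi
    rw [show lamList w = (rowLensAux w 1).reverse from rfl, List.mem_reverse] at hmem
    exact one_le_mem_rowLensAux w 1 _ hmem
  rw [show wordGraph w = ferrersGraph (w.count false) (w.count true) (fun i => lamW w i) from rfl,
    card_colorings, hMn]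
  -- per-cv product computation
  have hprod : ∀ cv : Fin (m+1) → Fin t,
      (∏ i : Fin (w.count false + 1),
        Fintype.card {x : Fin t // ∀ j : Fin (m+1), (j:ℕ) < lamW w (i:ℕ) → x ≠ cv j})
      = (t - prof cv 0)^(nv 0) * (∏ i : Fin m, (t - prof cv ((i:ℕ)+1))^(nv i.succ))
          * (t - prof cv m) := by
    intro cv
    have hlist : List.ofFn (fun i : Fin (w.count false + 1) => t - prof cv (lamW w (i:ℕ) - 1))
        = (lamList w).map (fun l => t - prof cv (l - 1)) := by
      apply List.ext_getElem
      · simp [hlen]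
      · intro k h1 h2
        rw [List.getElem_ofFn, List.getElem_map]
        have hk : k < (lamList w).length := by simpa using h2
        have hlW : lamW w k = (lamList w)[k] := by
          rw [show lamW w k = (lamList w).getD k 0 from rfl, List.getD_eq_getElem _ _ hk]
        simp [hlW]
    calc (∏ i : Fin (w.count false + 1),
        Fintype.card {x : Fin t // ∀ j : Fin (m+1), (j:ℕ) < lamW w (i:ℕ) → x ≠ cv j})
        = ∏ i : Fin (w.count false + 1), (t - prof cv (lamW w (i:ℕ) - 1)) :=
          Finset.prod_congr rfl fun i _ => card_avoid cv _ (h1le i)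
      _ = (List.ofFn (fun i : Fin (w.count false + 1) => t - prof cv (lamW w (i:ℕ) - 1))).prod :=
          List.prod_ofFn.symm
      _ = ((lamList w).map (fun l => t - prof cv (l - 1))).prod := by rw [hlist]
      _ = ((rowLensAux w 1).map (fun l => t - prof cv (l - 1))).prod := by
          rw [show lamList w = (rowLensAux w 1).reverse from rfl, List.map_reverse,
            List.prod_reverse]
      _ = (t - prof cv (1 - 1))^(nv 0) *
            (∏ i : Fin m, (t - prof cv (1 + (i:ℕ) + 1 - 1))^(nv i.succ)) *
            (t - prof cv (1 + m - 1)) := by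
          rw [hw, prod_map_rowLensAux m nv 1 (fun l => t - prof cv (l - 1))]
      _ = (t - prof cv 0)^(nv 0) * (∏ i : Fin m, (t - prof cv ((i:ℕ)+1))^(nv i.succ))
            * (t - prof cv m) := by
          rw [show (1:ℕ) - 1 = 0 from rfl, show 1 + m - 1 = m by omega]
          rw [Finset.prod_congr rfl (fun (i : Fin m) _ => by
            rw [show 1 + (i:ℕ) + 1 - 1 = (i:ℕ) + 1 by omega])]
  rw [Finset.sum_congr rfl fun cv _ => hprod cv]
  -- the profile map
  have hfin : Finite {r : Fin (m+1) → ℕ // r 0 = 1 ∧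
      ∀ i : Fin m, r i.succ = r i.castSucc ∨ r i.succ = r i.castSucc + 1} := by
    apply Finite.of_injective (fun r => (fun j => (⟨r.1 j, by
      have := r_le_of_steps r.1 r.2.1 r.2.2 j
      have := j.isLt
      omega⟩ : Fin (m+2))) : _ → (Fin (m+1) → Fin (m+2)))
    intro a b hab
    apply Subtype.ext
    funext j
    have := congrFun hab j
    simpa [Fin.ext_iff] using this
  haveI := hfin
  haveI : Fintype {r : Fin (m+1) → ℕ // r 0 = 1 ∧
      ∀ i : Fin m, r i.succ = r i.castSucc ∨ r i.succ = r i.castSucc + 1} := Fintype.ofFinite _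
  set P : (Fin (m+1) → Fin t) → {r : Fin (m+1) → ℕ // r 0 = 1 ∧
      ∀ i : Fin m, r i.succ = r i.castSucc ∨ r i.succ = r i.castSucc + 1} :=
    fun cv => ⟨fun j => prof cv (j:ℕ), prof_zero' cv, fun i => by
      have := prof_step cv (i:ℕ)
      simpa [Fin.val_succ] using this⟩ with hP
  have hgroup : (∑ cv : Fin (m+1) → Fin t,
      ((t - prof cv 0)^(nv 0) * (∏ i : Fin m, (t - prof cv ((i:ℕ)+1))^(nv i.succ))
        * (t - prof cv m)))
      = ∑ r : {r : Fin (m+1) → ℕ // r 0 = 1 ∧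
          ∀ i : Fin m, r i.succ = r i.castSucc ∨ r i.succ = r i.castSucc + 1},
        (Fintype.card {cv : Fin (m+1) → Fin t // P cv = r}) *
          ((t - r.1 0)^(nv 0) * (∏ i : Fin m, (t - r.1 i.succ)^(nv i.succ))
            * (t - r.1 (Fin.last m))) := by
    rw [← Fintype.sum_fiberwise P (fun cv =>
      (t - prof cv 0)^(nv 0) * (∏ i : Fin m, (t - prof cv ((i:ℕ)+1))^(nv i.succ))
        * (t - prof cv m))]
    refine Finset.sum_congr rfl fun r _ => ?_
    have hinner : ∀ c : {cv : Fin (m+1) → Fin t // P cv = r},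
        (t - prof c.1 0)^(nv 0) * (∏ i : Fin m, (t - prof c.1 ((i:ℕ)+1))^(nv i.succ))
          * (t - prof c.1 m)
        = (t - r.1 0)^(nv 0) * (∏ i : Fin m, (t - r.1 i.succ)^(nv i.succ))
            * (t - r.1 (Fin.last m)) := by
      intro c
      have hj : ∀ j : Fin (m+1), prof c.1 (j:ℕ) = r.1 j :=
        fun j => congrFun (congrArg Subtype.val c.2) j
      rw [show prof c.1 0 = r.1 0 from by simpa using hj 0,
        show prof c.1 m = r.1 (Fin.last m) from by simpa using hj (Fin.last m),
        Finset.prod_congr rfl (fun (i : Fin m) _ => by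
          rw [show prof c.1 ((i:ℕ)+1) = r.1 i.succ from by simpa [Fin.val_succ] using hj i.succ])]
    rw [Finset.sum_congr rfl fun c _ => hinner c, Finset.sum_const, smul_eq_mul,
      Finset.card_univ]
  rw [hgroup]
  -- fiber cardinality
  have hcard : ∀ r : {r : Fin (m+1) → ℕ // r 0 = 1 ∧
      ∀ i : Fin m, r i.succ = r i.castSucc ∨ r i.succ = r i.castSucc + 1},
      Fintype.card {cv : Fin (m+1) → Fin t // P cv = r}
        = t * ∏ i : Fin m, (if r.1 i.succ = r.1 i.castSucc + 1 then t - r.1 i.castSucc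
            else r.1 i.castSucc) := by
    intro r
    rw [← Nat.card_eq_fintype_card,
      Nat.card_congr (Equiv.subtypeEquivRight (fun cv => ?_)), fiber_card t m r.1 r.2.1 r.2.2]
    constructor
    · intro h j
      exact congrFun (congrArg Subtype.val h) j
    · intro h
      exact Subtype.ext (funext h)
  rw [finsum_eq_sum_of_fintype, Nat.cast_sum]
  refine Finset.sum_congr rfl fun r _ => ?_
  rw [hcard r]
  exact term_eq t m nv r.1 r.2.1 r.2.2
end

section
/- The chromatic polynomial of the complete bipartite graph K_{n+1,m+1} equals Σ_{k=1}^{m+1} S(m+1,k) · t(t−1)···(t−k+1) · (t−k)^{n+1}, where S(m+1,k) is the Stirling number of the second kind. -/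
open SimpleGraph Finset

/-- The Stirling numbers of the second kind: `stirling2 n k` is the number of
partitions of an `n`-element set into `k` nonempty blocks. -/
def stirling2 : ℕ → ℕ → ℕ
  | 0, 0 => 1
  | 0, _ + 1 => 0
  | _ + 1, 0 => 0
  | n + 1, k + 1 => (k + 1) * stirling2 n (k + 1) + stirling2 n k

lemma descFactorial_cast_int (t k : ℕ) :
    ((t.descFactorial k : ℤ)) = ∏ j ∈ Finset.range k, ((t : ℤ) - j) := by
  induction k with
  | zero => simp
  | succ k ih =>
    rw [Finset.prod_range_succ, ← ih, Nat.descFactorial_succ]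
    rcases le_or_gt k t with h | h
    · push_cast [Nat.cast_sub h]; ring
    · rw [Nat.descFactorial_eq_zero_iff_lt.2 h]
      simp [Nat.sub_eq_zero_of_le h.le]

lemma image_cons (m t : ℕ) (c : Fin t) (g : Fin m → Fin t) :
    Finset.image (Fin.cons c g) Finset.univ = insert c (Finset.image g Finset.univ) := by
  ext x
  simp only [Finset.mem_image, Finset.mem_insert, Finset.mem_univ, true_and]
  constructor
  · rintro ⟨i, rfl⟩
    refine Fin.cases ?_ ?_ i
    · left; simp
    · intro j; right; exact ⟨j, by simp⟩
  · rintro (rfl | ⟨j, rfl⟩)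
    · exact ⟨0, by simp⟩
    · exact ⟨j.succ, by simp⟩

lemma card_insert_subtype (t : ℕ) (s : Finset (Fin t)) (k : ℕ) :
    Fintype.card {c : Fin t // (insert c s).card = k} =
      (if s.card = k then k else 0) + (if s.card + 1 = k then t - s.card else 0) := by
  classical
  rw [Fintype.card_subtype]
  rw [Finset.card_eq_sum_ones, Finset.sum_filter]
  rw [← Finset.sum_add_sum_compl s]
  have h1 : ∑ c ∈ s, (if (insert c s).card = k then 1 else 0)
      = if s.card = k then k else 0 := by
    rw [Finset.sum_congr rfl (fun c hc => by
      rw [Finset.insert_eq_self.2 hc])]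
    split_ifs with h
    · simp [← h]
    · simp
  have h2 : ∑ c ∈ sᶜ, (if (insert c s).card = k then 1 else 0)
      = if s.card + 1 = k then t - s.card else 0 := by
    rw [Finset.sum_congr rfl (fun c hc => by
      rw [Finset.card_insert_of_notMem (Finset.mem_compl.1 hc)])]
    split_ifs with h
    · simp [Finset.card_compl]
    · simp
  rw [h1, h2]

lemma count_image_card (t : ℕ) : ∀ m k : ℕ,
    ((Finset.univ : Finset (Fin m → Fin t)).filter
        (fun g => (Finset.image g Finset.univ).card = k)).card
      = stirling2 m k * t.descFactorial k := by
  intro m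
  induction m with
  | zero =>
    intro k
    have : ∀ g : Fin 0 → Fin t, (Finset.image g Finset.univ).card = 0 := by
      intro g; simp
    rcases k with _ | k
    · rw [Finset.filter_true_of_mem (fun g _ => this g)]
      simp [stirling2, Finset.card_univ]
    · rw [Finset.filter_false_of_mem (fun g _ => by rw [this g]; omega)]
      simp [stirling2]
  | succ m ih =>
    intro k
    have key : ((Finset.univ : Finset (Fin (m+1) → Fin t)).filter
        (fun g => (Finset.image g Finset.univ).card = k)).card
        = ∑ g' : Fin m → Fin t,
            Fintype.card {c : Fin t // (insert c (Finset.image g' Finset.univ)).card = k} := by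
      rw [← Fintype.card_subtype, ← Fintype.card_sigma]
      apply Fintype.card_congr
      refine
        { toFun := fun x => ⟨Fin.tail x.1, x.1 0, ?_⟩
          invFun := fun x => ⟨Fin.cons x.2.1 x.1, ?_⟩
          left_inv := fun x => Subtype.ext (Fin.cons_self_tail x.1)
          right_inv := fun x => ?_ }
      · rw [← image_cons, Fin.cons_self_tail]; exact x.2
      · rw [image_cons]; exact x.2.2
      · obtain ⟨g', c, h⟩ := x
        rfl
    rw [key]
    have : ∀ g' : Fin m → Fin t,
        Fintype.card {c : Fin t // (insert c (Finset.image g' Finset.univ)).card = k}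
          = (if (Finset.image g' Finset.univ).card = k then k else 0)
            + (if (Finset.image g' Finset.univ).card + 1 = k then t - (Finset.image g' Finset.univ).card else 0) := by
      intro g'; exact card_insert_subtype t _ k
    rw [Finset.sum_congr rfl (fun g' _ => this g'), Finset.sum_add_distrib]
    have e1 : ∑ g' : Fin m → Fin t,
        (if (Finset.image g' Finset.univ).card = k then k else 0)
        = stirling2 m k * t.descFactorial k * k := by
      rw [← Finset.sum_filter, Finset.sum_const, ← ih k]
      simp [mul_comm]
    have e2 : ∑ g' : Fin m → Fin t,
        (if (Finset.image g' Finset.univ).card + 1 = k then t - (Finset.image g' Finset.univ).card else 0)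
        = if 1 ≤ k then stirling2 m (k-1) * t.descFactorial (k-1) * (t - (k-1)) else 0 := by
      rcases k with _ | k
      · simp
      · simp only [Nat.add_one_sub_one, if_pos (Nat.le_add_left 1 k)]
        have : ∀ g' : Fin m → Fin t,
            (if (Finset.image g' Finset.univ).card + 1 = k + 1 then t - (Finset.image g' Finset.univ).card else 0)
            = (if (Finset.image g' Finset.univ).card = k then t - k else 0) := by
          intro g'
          by_cases h : (Finset.image g' Finset.univ).card = k <;> simp [h]
        rw [Finset.sum_congr rfl (fun g' _ => this g'), ← Finset.sum_filter,
          Finset.sum_const, ← ih k]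
        simp [mul_comm]
    rw [e1, e2]
    rcases k with _ | k
    · simp [stirling2]
    · simp only [Nat.add_one_sub_one, if_pos (Nat.le_add_left 1 k)]
      have hS : stirling2 (m+1) (k+1) = (k + 1) * stirling2 m (k + 1) + stirling2 m k := rfl
      rw [hS, Nat.descFactorial_succ]
      ring

/-- The chromatic polynomial of `K_{n+1,m+1}` equals
`Σ_{k=1}^{m+1} S(m+1,k) · t(t−1)⋯(t−k+1) · (t−k)^{n+1}`, expressed by counting
proper colorings with `t` colors for every `t : ℕ`. -/
theorem stmt11 (n m : ℕ) (t : ℕ) :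
    (Nat.card ((completeBipartiteGraph (Fin (n+1)) (Fin (m+1))).Coloring (Fin t)) : ℤ) =
      ∑ k ∈ Finset.Icc 1 (m+1),
        (stirling2 (m+1) k : ℤ) * (∏ j ∈ Finset.range k, ((t : ℤ) - j)) *
          ((t : ℤ) - k) ^ (n+1) := by
  classical
  -- Step 1: an explicit description of colorings
  have E : (completeBipartiteGraph (Fin (n+1)) (Fin (m+1))).Coloring (Fin t) ≃
      Σ g : Fin (m+1) → Fin t,
        (Fin (n+1) → {c : Fin t // c ∉ Finset.image g Finset.univ}) :=
    { toFun := fun C => ⟨fun j => C (Sum.inr j), fun i => ⟨C (Sum.inl i), by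
        simp only [Finset.mem_image, Finset.mem_univ, true_and, not_exists]
        intro j h
        exact (C.valid (by simp) h.symm)⟩⟩
      invFun := fun x => Coloring.mk (Sum.elim (fun i => (x.2 i).1) x.1) (by
        rintro (i | j) (i' | j') h
        · simp at h
        · intro hc
          have := (x.2 i).2
          simp only [Finset.mem_image, Finset.mem_univ, true_and, not_exists] at this
          exact this j' hc.symm
        · intro hc
          have := (x.2 i').2
          simp only [Finset.mem_image, Finset.mem_univ, true_and, not_exists] at this
          exact this j hc
        · simp at h)
      left_inv := fun C => DFunLike.ext _ _ (by rintro (i | j) <;> rfl)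
      right_inv := fun x => rfl }
  rw [Nat.card_congr E, Nat.card_eq_fintype_card, Fintype.card_sigma]
  have hcard : ∀ g : Fin (m+1) → Fin t,
      Fintype.card (Fin (n+1) → {c : Fin t // c ∉ Finset.image g Finset.univ})
        = (t - (Finset.image g Finset.univ).card) ^ (n+1) := by
    intro g
    rw [Fintype.card_fun, Fintype.card_fin]
    congr 1
    rw [Fintype.card_subtype_compl, Fintype.card_fin]
    congr 1
    exact Fintype.card_coe _
  rw [Finset.sum_congr rfl (fun g _ => hcard g)]
  -- Step 2: group by image cardinality
  have hmaps : ∀ g : Fin (m+1) → Fin t, g ∈ (Finset.univ : Finset _) →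
      (Finset.image g Finset.univ).card ∈ Finset.Icc 1 (m+1) := by
    intro g _
    rw [Finset.mem_Icc]
    constructor
    · exact (Finset.univ_nonempty.image g).card_pos
    · exact (Finset.card_image_le).trans (by simp)
  rw [← Finset.sum_fiberwise_of_maps_to hmaps]
  have hinner : ∀ k ∈ Finset.Icc 1 (m+1),
      ∑ g ∈ (Finset.univ : Finset (Fin (m+1) → Fin t)).filter
          (fun g => (Finset.image g Finset.univ).card = k),
        (t - (Finset.image g Finset.univ).card) ^ (n+1)
      = stirling2 (m+1) k * t.descFactorial k * (t - k) ^ (n+1) := by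
    intro k _
    rw [Finset.sum_congr rfl (fun g hg => by
      rw [(Finset.mem_filter.1 hg).2]), Finset.sum_const, count_image_card]
    simp [mul_comm]
  rw [Finset.sum_congr rfl hinner]
  -- Step 3: cast to ℤ
  push_cast
  refine Finset.sum_congr rfl (fun k _ => ?_)
  rw [descFactorial_cast_int]
  rcases le_or_gt k t with h | h
  · rw [Nat.cast_sub h]
  · have hz : ∏ j ∈ Finset.range k, ((t : ℤ) - j) = 0 :=
      Finset.prod_eq_zero (Finset.mem_range.2 h) (by simp)
    rw [hz]
    ring
end

section
/- The exponential generating function of the chromatic symmetric functions of complete bipartite graphs satisfies Σ_{n,m ≥ 0} X_{K_{n,m}} s^n/n! · t^m/m! = ∏_{i ≥ 1} ( e^{s x_i} + e^{t x_i} − 1 ), as formal power series in s, t and the variables x_1, x_2, .... -/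
open SimpleGraph Finset
open scoped Classical

/-- The chromatic symmetric function of a graph `G`, as a formal power series in
the variables `x_0, x_1, x_2, …`: the coefficient of the monomial `∏ x_i^{d i}`
is the number of proper colorings `κ : V → ℕ` for which exactly `d i` vertices
receive the color `i`.  This encodes `X_G = Σ_κ ∏_v x_{κ(v)}`. -/
noncomputable def chromSym {V : Type} (G : SimpleGraph V) : MvPowerSeries ℕ ℚ :=
  fun d => (Nat.card {κ : V → ℕ // (∀ v w, G.Adj v w → κ v ≠ κ w) ∧
      ∀ i : ℕ, Nat.card {v : V // κ v = i} = d i} : ℚ)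

/-- The power sum symmetric function `p_k = Σ_i x_i^k` (for `k ≥ 1`), as a
formal power series. -/
noncomputable def powerSum (k : ℕ) : MvPowerSeries ℕ ℚ :=
  fun d => if ∃ i, d = Finsupp.single i k then 1 else 0

/-- In the power series ring `MvPowerSeries (ℕ ⊕ Bool) ℚ`, the variable
`Sum.inr false` plays the role of `s`, the variable `Sum.inr true` plays the
role of `t`, and `Sum.inl i` is the symmetric function variable `x_i`.
`expVar b i` is the exponential `e^{s·x_i}` (for `b = false`) or `e^{t·x_i}`
(for `b = true`): its monomials are `(s x_i)^k / k!`. -/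
noncomputable def expVar (b : Bool) (i : ℕ) : MvPowerSeries (ℕ ⊕ Bool) ℚ :=
  fun d => if d.support ⊆ {Sum.inr b, Sum.inl i} ∧ d (Sum.inr b) = d (Sum.inl i)
    then (1 : ℚ) / Nat.factorial (d (Sum.inl i)) else 0

lemma finite_fibered (V : Type) [Fintype V] (e : ℕ → ℕ) (T : Finset ℕ)
    (h0 : ∀ i ∉ T, e i = 0) :
    Finite {κ : V → ℕ // ∀ i, Nat.card {v : V // κ v = i} = e i} := by
  apply Finite.of_injective (β := V → {i // i ∈ T})
    (fun κ => fun v => ⟨κ.1 v, by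
      by_contra hmem
      have h1 : e (κ.1 v) = 0 := h0 _ hmem
      have h2 := κ.2 (κ.1 v)
      rw [h1] at h2
      have : Nonempty {w : V // κ.1 w = κ.1 v} := ⟨⟨v, rfl⟩⟩
      rw [Nat.card_eq_fintype_card] at h2
      exact (Fintype.card_pos_iff.mpr this).ne' h2⟩)
  intro κ κ' h
  ext v
  exact congrArg Subtype.val (congrFun h v)

/-- The multinomial counting lemma. -/
lemma card_fibered (T : Finset ℕ) : ∀ (V : Type) [Fintype V] (e : ℕ → ℕ),
    (∀ i ∉ T, e i = 0) → (∑ i ∈ T, e i) = Fintype.card V →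
    Nat.card {κ : V → ℕ // ∀ i, Nat.card {v : V // κ v = i} = e i}
        * ∏ i ∈ T, Nat.factorial (e i)
      = Nat.factorial (Fintype.card V) := by
  induction T using Finset.induction_on with
  | empty =>
    intro V _ e h0 hsum
    simp only [sum_empty] at hsum
    haveI : IsEmpty V := Fintype.card_eq_zero_iff.mp hsum.symm
    have h1 : Nat.card {κ : V → ℕ // ∀ i, Nat.card {v : V // κ v = i} = e i} = 1 := by
      rw [Nat.card_eq_one_iff_unique]
      constructor
      · constructor
        intro κ κ'
        apply Subtype.ext
        ext v
        exact isEmptyElim v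
      · refine ⟨⟨fun v => 0, fun i => ?_⟩⟩
        have : IsEmpty {v : V // (fun _ => 0) v = i} := ⟨fun v => isEmptyElim v.1⟩
        rw [Nat.card_of_isEmpty, h0 i (by simp)]
    rw [h1, ← hsum]
    simp
  | @insert a s ha ih =>
    intro V _ e h0 hsum
    set N := Fintype.card V with hN
    set k := e a with hk
    rw [sum_insert ha] at hsum
    have hkN : k ≤ N := by omega
    set Q := {κ : V → ℕ // ∀ i, Nat.card {v : V // κ v = i} = e i} with hQ
    haveI : Finite Q := finite_fibered V e (insert a s) h0
    haveI : Fintype Q := Fintype.ofFinite Q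
    set g : Q → {B : Finset V // B.card = k} := fun κ =>
      ⟨univ.filter (fun v => κ.1 v = a), by
        have := κ.2 a
        rw [Nat.card_eq_fintype_card, Fintype.card_subtype] at this
        exact this⟩ with hg
    have key : ∀ B : {B : Finset V // B.card = k},
        Nat.card {κ : Q // g κ = B} * ∏ i ∈ s, Nat.factorial (e i) = Nat.factorial (N - k) := by
      intro B
      have hcard : Fintype.card {v : V // v ∉ B.1} = N - k := by
        have h1 : Fintype.card {v : V // v ∈ B.1} = k := by
          rw [← Nat.card_eq_fintype_card, Nat.card_eq_finsetCard]
          exact B.2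
        have h2 := Fintype.card_subtype_compl (fun v => v ∈ B.1)
        rw [h1] at h2
        exact h2
      have E : {κ : Q // g κ = B} ≃
          {κ' : {v : V // v ∉ B.1} → ℕ //
            ∀ i, Nat.card {v : {v : V // v ∉ B.1} // κ' v = i} = Function.update e a 0 i} := by
        refine ⟨fun κ => ⟨fun v => κ.1.1 v.1, ?_⟩, fun κ' => ⟨⟨fun v =>
          if h : v ∈ B.1 then a else κ'.1 ⟨v, h⟩, ?_⟩, ?_⟩, ?_, ?_⟩
        · -- fibers of restriction
          intro i
          have hB : B.1 = univ.filter (fun v => κ.1.1 v = a) :=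
            (congrArg Subtype.val κ.2).symm
          by_cases hi : i = a
          · subst hi
            have : IsEmpty {v : {v : V // v ∉ B.1} // κ.1.1 v.1 = i} := by
              constructor
              rintro ⟨⟨v, hv⟩, hvi⟩
              exact hv (by rw [hB]; simp [hvi])
            rw [Nat.card_of_isEmpty, Function.update_self]
          · have Eq1 : {v : {v : V // v ∉ B.1} // κ.1.1 v.1 = i} ≃ {v : V // κ.1.1 v = i} := by
              refine Equiv.subtypeSubtypeEquivSubtype
                (p := fun v => v ∉ B.1) (q := fun v => κ.1.1 v = i) ?_
              intro v hv
              rw [hB]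
              simp only [mem_filter, mem_univ, true_and]
              intro h2
              exact hi (hv ▸ h2 ▸ rfl)
            rw [Nat.card_congr Eq1, κ.1.2 i, Function.update_of_ne hi]
        · -- fibers of the combined function
          intro i
          have hnoa : ∀ v : {v : V // v ∉ B.1}, κ'.1 v ≠ a := by
            intro v hv
            have h3 := κ'.2 a
            rw [Function.update_self, Nat.card_eq_fintype_card,
              Fintype.card_eq_zero_iff] at h3
            exact h3.false ⟨v, hv⟩
          by_cases hi : i = a
          · subst hi
            have Eq1 : {v : V // (if h : v ∈ B.1 then i else κ'.1 ⟨v, h⟩) = i}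
                ≃ {v : V // v ∈ B.1} := by
              apply Equiv.subtypeEquivRight
              intro v
              constructor
              · intro h
                by_contra hv
                rw [dif_neg hv] at h
                exact hnoa _ h
              · intro h; rw [dif_pos h]
            rw [Nat.card_congr Eq1, Nat.card_eq_finsetCard]
            exact B.2
          · have Eq1 : {v : V // (if h : v ∈ B.1 then a else κ'.1 ⟨v, h⟩) = i}
                ≃ {v : {v : V // v ∉ B.1} // κ'.1 v = i} := by
              refine Equiv.trans (Equiv.subtypeEquivRight (q := fun v =>
                  ∃ h : v ∉ B.1, κ'.1 ⟨v, h⟩ = i) ?_) ?_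
              · intro v
                constructor
                · intro h
                  have hv : v ∉ B.1 := by
                    intro hv
                    rw [dif_pos hv] at h
                    exact hi h.symm
                  exact ⟨hv, by rw [dif_neg hv] at h; exact h⟩
                · rintro ⟨hv, h⟩
                  rw [dif_neg hv]; exact h
              · exact (Equiv.subtypeSubtypeEquivSubtypeExists
                  (fun v => v ∉ B.1) (fun v => κ'.1 v = i)).symm
            rw [Nat.card_congr Eq1, κ'.2 i, Function.update_of_ne hi]
        · -- g value is B
          apply Subtype.ext
          ext v
          simp only [hg, mem_filter, mem_univ, true_and]
          constructor
          · intro hv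
            by_contra hvB
            rw [dif_neg hvB] at hv
            have h3 := κ'.2 a
            rw [Function.update_self, Nat.card_eq_fintype_card,
              Fintype.card_eq_zero_iff] at h3
            exact h3.false ⟨⟨v, hvB⟩, hv⟩
          · intro hv; rw [dif_pos hv]
        · -- left inverse
          rintro ⟨⟨κ, hκ⟩, hgκ⟩
          have hB : B.1 = univ.filter (fun v => κ v = a) := (congrArg Subtype.val hgκ).symm
          apply Subtype.ext
          apply Subtype.ext
          ext v
          by_cases hv : v ∈ B.1
          · have : κ v = a := by rw [hB] at hv; simpa using hv
            simp [dif_pos hv, this]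
          · simp [dif_neg hv]
        · -- right inverse
          rintro ⟨κ', hκ'⟩
          apply Subtype.ext
          ext v
          exact dif_neg v.2
      rw [Nat.card_congr E]
      have hprod : ∏ i ∈ s, Nat.factorial (e i)
          = ∏ i ∈ s, Nat.factorial (Function.update e a 0 i) := by
        apply prod_congr rfl
        intro i hi
        rw [Function.update_of_ne (by rintro rfl; exact ha hi)]
      rw [hprod, ← hcard]
      apply ih {v : V // v ∉ B.1} (Function.update e a 0)
      · intro i hi
        by_cases hia : i = a
        · subst hia; rw [Function.update_self]
        · rw [Function.update_of_ne hia]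
          exact h0 i (by simp [hia, hi])
      · rw [hcard]
        have : ∑ i ∈ s, Function.update e a 0 i = ∑ i ∈ s, e i := by
          apply sum_congr rfl
          intro i hi
          rw [Function.update_of_ne (by rintro rfl; exact ha hi)]
        omega
    have hQcard : Nat.card Q = ∑ B : {B : Finset V // B.card = k}, Nat.card {κ : Q // g κ = B} := by
      rw [Nat.card_eq_fintype_card, ← Fintype.card_congr (Equiv.sigmaFiberEquiv g),
        Fintype.card_sigma]
      simp [Nat.card_eq_fintype_card]
    rw [prod_insert ha, ← hk, hQcard, ← mul_assoc]
    calc (∑ B : {B : Finset V // B.card = k}, Nat.card {κ : Q // g κ = B}) * Nat.factorial k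
          * ∏ i ∈ s, Nat.factorial (e i)
        = ∑ B : {B : Finset V // B.card = k},
            (Nat.card {κ : Q // g κ = B} * ∏ i ∈ s, Nat.factorial (e i)) * Nat.factorial k := by
          rw [Finset.sum_mul, Finset.sum_mul]
          apply sum_congr rfl; intros; ring
      _ = ∑ _B : {B : Finset V // B.card = k}, Nat.factorial (N - k) * Nat.factorial k := by
          apply sum_congr rfl; intro B _; rw [key B]
      _ = N.choose k * (Nat.factorial (N - k) * Nat.factorial k) := by
          rw [sum_const, Finset.card_univ, Fintype.card_finset_len, smul_eq_mul, ← hN]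
      _ = Nat.factorial N := by
          rw [← Nat.choose_mul_factorial_mul_factorial hkN]; ring

lemma card_fibered_zero (V : Type) [Fintype V] (e : ℕ → ℕ) (T : Finset ℕ)
    (h0 : ∀ i ∉ T, e i = 0) (hsum : (∑ i ∈ T, e i) ≠ Fintype.card V) :
    Nat.card {κ : V → ℕ // ∀ i, Nat.card {v : V // κ v = i} = e i} = 0 := by
  rw [Nat.card_eq_zero]
  left
  constructor
  rintro ⟨κ, hκ⟩
  apply hsum
  have hmem : ∀ v : V, κ v ∈ T := by
    intro v
    by_contra hv
    have h2 := hκ (κ v)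
    rw [h0 _ hv, Nat.card_eq_zero] at h2
    rcases h2 with h2 | h2
    · exact h2.false ⟨v, rfl⟩
    · exact (Set.toFinite _).not_infinite (Set.infinite_coe_iff.mp h2)
  have := Finset.card_eq_sum_card_fiberwise (f := κ) (s := univ) (t := T) (fun v _ => hmem v)
  rw [Finset.card_univ] at this
  rw [this]
  apply sum_congr rfl
  intro i _
  rw [← hκ i, Nat.card_eq_fintype_card, Fintype.card_subtype]

/-- split a fiber over a sum type -/
def sumFiberEquiv {α β : Type} (p : α ⊕ β → Prop) :
    {v : α ⊕ β // p v} ≃ {a : α // p (.inl a)} ⊕ {b : β // p (.inr b)} where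
  toFun := fun x => match x with
    | ⟨.inl a, h⟩ => .inl ⟨a, h⟩
    | ⟨.inr b, h⟩ => .inr ⟨b, h⟩
  invFun := fun x => match x with
    | .inl ⟨a, h⟩ => ⟨.inl a, h⟩
    | .inr ⟨b, h⟩ => ⟨.inr b, h⟩
  left_inv := by rintro ⟨(a|b), h⟩ <;> rfl
  right_inv := by rintro (⟨a,h⟩|⟨b,h⟩) <;> rfl

lemma fiber_split {n m : ℕ} (κ : Fin n ⊕ Fin m → ℕ) (i : ℕ) :
    Nat.card {v : Fin n ⊕ Fin m // κ v = i}
      = Nat.card {a : Fin n // κ (Sum.inl a) = i} + Nat.card {b : Fin m // κ (Sum.inr b) = i} := by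
  rw [Nat.card_congr (sumFiberEquiv _), Nat.card_sum]

lemma card_bipartite (n m : ℕ) (e : ℕ → ℕ) (S : Finset ℕ) (hS : ∀ i, i ∈ S ↔ e i ≠ 0) :
    Nat.card {κ : Fin n ⊕ Fin m → ℕ //
        (∀ v w, (completeBipartiteGraph (Fin n) (Fin m)).Adj v w → κ v ≠ κ w) ∧
        ∀ i, Nat.card {v : Fin n ⊕ Fin m // κ v = i} = e i}
    = ∑ A ∈ S.powerset,
        Nat.card {κ₁ : Fin n → ℕ // ∀ i, Nat.card {v : Fin n // κ₁ v = i}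
            = if i ∈ A then 0 else e i}
        * Nat.card {κ₂ : Fin m → ℕ // ∀ i, Nat.card {v : Fin m // κ₂ v = i}
            = if i ∈ A then e i else 0} := by
  have adj : ∀ (a : Fin n) (b : Fin m),
      (completeBipartiteGraph (Fin n) (Fin m)).Adj (Sum.inl a) (Sum.inr b) := by
    intro a b; simp
  set Q := {κ : Fin n ⊕ Fin m → ℕ //
      (∀ v w, (completeBipartiteGraph (Fin n) (Fin m)).Adj v w → κ v ≠ κ w) ∧
      ∀ i, Nat.card {v : Fin n ⊕ Fin m // κ v = i} = e i} with hQdef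
  haveI : Finite Q := by
    haveI := finite_fibered (Fin n ⊕ Fin m) e S (fun i hi => by
      by_contra h; exact hi ((hS i).mpr h))
    exact Finite.of_injective
      (β := {κ : Fin n ⊕ Fin m → ℕ // ∀ i, Nat.card {v : Fin n ⊕ Fin m // κ v = i} = e i})
      (fun κ => ⟨κ.1, κ.2.2⟩)
      (fun κ κ' h => Subtype.ext (by simpa using congrArg Subtype.val h))
  haveI : Fintype Q := Fintype.ofFinite Q
  set g : Q → {A : Finset ℕ // A ∈ S.powerset} := fun κ =>
    ⟨S.filter (fun i => ∃ b, κ.1 (Sum.inr b) = i), mem_powerset.mpr (filter_subset _ _)⟩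
    with hg
  have key : ∀ (A : Finset ℕ) (hA : A ∈ S.powerset),
      Nat.card {κ : Q // g κ = ⟨A, hA⟩}
        = Nat.card {κ₁ : Fin n → ℕ // ∀ i, Nat.card {v : Fin n // κ₁ v = i}
            = if i ∈ A then 0 else e i}
          * Nat.card {κ₂ : Fin m → ℕ // ∀ i, Nat.card {v : Fin m // κ₂ v = i}
            = if i ∈ A then e i else 0} := by
    intro A hA
    have hAS : A ⊆ S := mem_powerset.mp hA
    rw [← Nat.card_prod]
    apply Nat.card_congr
    refine ⟨fun κ => (⟨fun a => κ.1.1 (Sum.inl a), ?_⟩, ⟨fun b => κ.1.1 (Sum.inr b), ?_⟩),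
      fun p => ⟨⟨Sum.elim p.1.1 p.2.1, ?_, ?_⟩, ?_⟩, ?_, ?_⟩
    · -- left fibers
      intro i
      show Nat.card {a : Fin n // κ.1.1 (Sum.inl a) = i} = if i ∈ A then 0 else e i
      have hfilter : S.filter (fun j => ∃ b, κ.1.1 (Sum.inr b) = j) = A :=
        Subtype.ext_iff.mp κ.2
      by_cases hiA : i ∈ A
      · rw [if_pos hiA]
        have hb : ∃ b, κ.1.1 (Sum.inr b) = i := by
          rw [← hfilter] at hiA
          exact (mem_filter.mp hiA).2
        obtain ⟨b, hb⟩ := hb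
        have : IsEmpty {a : Fin n // κ.1.1 (Sum.inl a) = i} := by
          constructor
          rintro ⟨a, ha⟩
          exact κ.1.2.1 _ _ (adj a b) (ha.trans hb.symm)
        exact Nat.card_of_isEmpty
      · rw [if_neg hiA]
        have hsplit := (κ.1.2.2 i).symm.trans (fiber_split κ.1.1 i)
        have hright : Nat.card {b : Fin m // κ.1.1 (Sum.inr b) = i} = 0 := by
          by_contra h
          obtain ⟨⟨b, hb⟩⟩ := (Nat.card_ne_zero.mp h).1
          have hiS : i ∈ S := (hS i).mpr (by
            intro he
            rw [he] at hsplit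
            omega)
          exact hiA (hfilter ▸ mem_filter.mpr ⟨hiS, ⟨b, hb⟩⟩)
        omega
    · -- right fibers
      intro i
      show Nat.card {b : Fin m // κ.1.1 (Sum.inr b) = i} = if i ∈ A then e i else 0
      have hfilter : S.filter (fun j => ∃ b, κ.1.1 (Sum.inr b) = j) = A :=
        Subtype.ext_iff.mp κ.2
      have hsplit := (κ.1.2.2 i).symm.trans (fiber_split κ.1.1 i)
      by_cases hiA : i ∈ A
      · rw [if_pos hiA]
        have hb : ∃ b, κ.1.1 (Sum.inr b) = i := by
          rw [← hfilter] at hiA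
          exact (mem_filter.mp hiA).2
        obtain ⟨b, hb⟩ := hb
        have : IsEmpty {a : Fin n // κ.1.1 (Sum.inl a) = i} := by
          constructor
          rintro ⟨a, ha⟩
          exact κ.1.2.1 _ _ (adj a b) (ha.trans hb.symm)
        rw [Nat.card_of_isEmpty (α := {a : Fin n // κ.1.1 (Sum.inl a) = i})] at hsplit
        omega
      · rw [if_neg hiA]
        by_contra h
        obtain ⟨⟨b, hb⟩⟩ := (Nat.card_ne_zero.mp h).1
        have hiS : i ∈ S := (hS i).mpr (by
          intro he
          rw [he] at hsplit
          have : Nat.card {b : Fin m // κ.1.1 (Sum.inr b) = i} ≠ 0 := h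
          omega)
        exact hiA (hfilter ▸ mem_filter.mpr ⟨hiS, ⟨b, hb⟩⟩)
    · -- properness of the recombination
      have cross : ∀ (a : Fin n) (b : Fin m), p.1.1 a ≠ p.2.1 b := by
        intro a b hEq
        have h1 : Nat.card {x : Fin n // p.1.1 x = p.1.1 a} ≠ 0 :=
          Nat.card_ne_zero.mpr ⟨⟨⟨a, rfl⟩⟩, inferInstance⟩
        have h2 : Nat.card {x : Fin m // p.2.1 x = p.1.1 a} ≠ 0 :=
          Nat.card_ne_zero.mpr ⟨⟨⟨b, hEq.symm⟩⟩, inferInstance⟩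
        have e1 := p.1.2 (p.1.1 a)
        have e2 := p.2.2 (p.1.1 a)
        by_cases hiA : p.1.1 a ∈ A
        · rw [if_pos hiA] at e1
          exact h1 e1
        · rw [if_neg hiA] at e2
          exact h2 e2
      rintro (a | b) (a' | b') hadj heq
      · simp [completeBipartiteGraph] at hadj
      · exact cross a b' heq
      · exact cross a' b heq.symm
      · simp [completeBipartiteGraph] at hadj
    · -- fibers of the recombination
      intro i
      rw [fiber_split]
      have e1 := p.1.2 i
      have e2 := p.2.2 i
      have hl : Nat.card {a : Fin n // Sum.elim p.1.1 p.2.1 (Sum.inl a) = i}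
          = Nat.card {a : Fin n // p.1.1 a = i} := rfl
      have hr : Nat.card {b : Fin m // Sum.elim p.1.1 p.2.1 (Sum.inr b) = i}
          = Nat.card {b : Fin m // p.2.1 b = i} := rfl
      rw [hl, hr, e1, e2]
      by_cases hiA : i ∈ A
      · rw [if_pos hiA, if_pos hiA, Nat.zero_add]
      · rw [if_neg hiA, if_neg hiA, Nat.add_zero]
    · -- g value
      apply Subtype.ext
      show S.filter _ = A
      ext i
      rw [mem_filter]
      constructor
      · rintro ⟨hiS, b, hb⟩
        by_contra hiA
        have e2 := p.2.2 i
        rw [if_neg hiA] at e2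
        have : Nat.card {x : Fin m // p.2.1 x = i} ≠ 0 := by
          rw [Nat.card_ne_zero]
          exact ⟨⟨⟨b, hb⟩⟩, inferInstance⟩
        exact this e2
      · intro hiA
        refine ⟨hAS hiA, ?_⟩
        have e2 := p.2.2 i
        rw [if_pos hiA] at e2
        have hne : e i ≠ 0 := (hS i).mp (hAS hiA)
        have : Nonempty {x : Fin m // p.2.1 x = i} := by
          have := Nat.card_ne_zero (α := {x : Fin m // p.2.1 x = i})
          rw [e2] at this
          exact (this.mp hne).1
        obtain ⟨⟨b, hb⟩⟩ := this
        exact ⟨b, hb⟩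
    · -- left inverse
      rintro ⟨⟨κ, hκ1, hκ2⟩, hgκ⟩
      apply Subtype.ext
      apply Subtype.ext
      ext (a | b) <;> rfl
    · -- right inverse
      rintro ⟨⟨κ₁, h₁⟩, ⟨κ₂, h₂⟩⟩
      refine Prod.ext ?_ ?_
      · apply Subtype.ext; rfl
      · apply Subtype.ext; rfl
  have hQcard : Nat.card Q
      = ∑ A : {A : Finset ℕ // A ∈ S.powerset}, Nat.card {κ : Q // g κ = A} := by
    rw [Nat.card_eq_fintype_card, ← Fintype.card_congr (Equiv.sigmaFiberEquiv g),
      Fintype.card_sigma]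
    simp [Nat.card_eq_fintype_card]
  rw [hQcard]
  rw [← Finset.sum_coe_sort S.powerset]
  apply Finset.sum_congr rfl
  intro A _
  exact key A.1 A.2

lemma expVar_coeff (b : Bool) (i : ℕ) (c : (ℕ ⊕ Bool) →₀ ℕ) :
    MvPowerSeries.coeff c (expVar b i)
      = if c.support ⊆ {Sum.inr b, Sum.inl i} ∧ c (Sum.inr b) = c (Sum.inl i)
        then (1 : ℚ) / Nat.factorial (c (Sum.inl i)) else 0 := rfl

/-- canonical monomial `(s_b x_i)^k` -/
noncomputable def can (b : Bool) (i : ℕ) (k : ℕ) : (ℕ ⊕ Bool) →₀ ℕ :=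
  Finsupp.single (Sum.inr b) k + Finsupp.single (Sum.inl i) k

lemma can_inl (b : Bool) (i k : ℕ) : can b i k (Sum.inl i) = k := by
  simp [can, Finsupp.single_apply]

lemma can_inl_ne (b : Bool) (i k j : ℕ) (h : j ≠ i) : can b i k (Sum.inl j) = 0 := by
  simp [can, Finsupp.single_apply, h.symm]

lemma can_inr (b : Bool) (i k : ℕ) : can b i k (Sum.inr b) = k := by
  simp [can, Finsupp.single_apply]

lemma can_inr_ne (b b' : Bool) (i k : ℕ) (h : b' ≠ b) : can b i k (Sum.inr b') = 0 := by
  simp [can, Finsupp.single_apply, h.symm]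

lemma can_zero (b : Bool) (i : ℕ) : can b i 0 = 0 := by simp [can]

lemma can_support (b : Bool) (i k : ℕ) :
    (can b i k).support ⊆ {Sum.inr b, Sum.inl i} := by
  refine (Finsupp.support_add).trans ?_
  apply Finset.union_subset
  · exact (Finsupp.support_single_subset).trans (by intro x hx; simp at hx; simp [hx])
  · exact (Finsupp.support_single_subset).trans (by intro x hx; simp at hx; simp [hx])

lemma coeff_can (b : Bool) (i k : ℕ) :
    MvPowerSeries.coeff (can b i k) (expVar false i + expVar true i - 1)
      = (1 : ℚ) / Nat.factorial k := by
  rw [map_sub, map_add]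
  rcases Nat.eq_zero_or_pos k with hk | hk
  · subst hk
    rw [can_zero]
    have h1 : ∀ b' : Bool, MvPowerSeries.coeff (0 : (ℕ ⊕ Bool) →₀ ℕ) (expVar b' i) = 1 := by
      intro b'
      rw [expVar_coeff]
      simp
    rw [h1, h1, MvPowerSeries.coeff_one, if_pos rfl]
    norm_num
  · have hne : can b i k ≠ 0 := by
      intro h
      have := can_inl b i k
      rw [h] at this
      simp at this
      omega
    have hmain : MvPowerSeries.coeff (can b i k) (expVar b i) = 1 / Nat.factorial k := by
      rw [expVar_coeff, if_pos ⟨can_support b i k, by rw [can_inr, can_inl]⟩, can_inl]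
    have hother : MvPowerSeries.coeff (can b i k) (expVar (!b) i) = 0 := by
      rw [expVar_coeff, if_neg]
      rintro ⟨-, h2⟩
      rw [can_inr_ne b (!b) i k (Bool.not_ne_self b), can_inl] at h2
      omega
    have hone : MvPowerSeries.coeff (can b i k) (1 : MvPowerSeries (ℕ ⊕ Bool) ℚ) = 0 := by
      rw [MvPowerSeries.coeff_one, if_neg hne]
    cases b
    · rw [hmain, hone]
      have := hother
      simp only [Bool.not_false] at this
      rw [this]
      ring
    · rw [hmain, hone]
      have := hother
      simp only [Bool.not_true] at this
      rw [this]
      ring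

lemma coeff_factor_ne (i : ℕ) (c : (ℕ ⊕ Bool) →₀ ℕ)
    (h : MvPowerSeries.coeff c (expVar false i + expVar true i - 1) ≠ 0) :
    ∃ b, c = can b i (c (Sum.inl i)) := by
  by_cases hc : c = 0
  · exact ⟨false, by rw [hc]; simp [can_zero]⟩
  · rw [map_sub, map_add, MvPowerSeries.coeff_one, if_neg hc, sub_zero] at h
    -- at most one of the two conditions holds; one must
    have hcase : ∃ b : Bool, c.support ⊆ {Sum.inr b, Sum.inl i}
        ∧ c (Sum.inr b) = c (Sum.inl i) := by
      by_contra hno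
      push_neg at hno
      rw [expVar_coeff, expVar_coeff] at h
      rw [if_neg (fun hh => hno false hh.1 hh.2), if_neg (fun hh => hno true hh.1 hh.2)] at h
      simp at h
    obtain ⟨b, hsupp, hval⟩ := hcase
    refine ⟨b, ?_⟩
    ext x
    rcases x with j | b'
    · by_cases hj : j = i
      · subst hj; rw [can_inl]
      · rw [can_inl_ne _ _ _ _ hj]
        by_contra hx
        have : Sum.inl j ∈ c.support := Finsupp.mem_support_iff.mpr hx
        have := hsupp this
        simp [hj] at this
    · by_cases hb : b' = b
      · subst hb; rw [can_inr, hval]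
      · rw [can_inr_ne _ _ _ _ hb]
        by_contra hx
        have : Sum.inr b' ∈ c.support := Finsupp.mem_support_iff.mpr hx
        have := hsupp this
        simp [hb] at this

lemma coeff_prod_expand (d : (ℕ ⊕ Bool) →₀ ℕ) (F : Finset ℕ)
    (hF : ∀ i : ℕ, d (Sum.inl i) ≠ 0 → i ∈ F) :
    MvPowerSeries.coeff d (∏ i ∈ F, (expVar false i + expVar true i - 1)) =
      ∑ A ∈ (F.filter (fun i => d (Sum.inl i) ≠ 0)).powerset,
        if (∑ i ∈ A, d (Sum.inl i) = d (Sum.inr true)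
            ∧ ∑ i ∈ (F.filter (fun i => d (Sum.inl i) ≠ 0)) \ A, d (Sum.inl i)
                = d (Sum.inr false))
        then ∏ i ∈ (F.filter (fun i => d (Sum.inl i) ≠ 0)),
          (1 : ℚ) / Nat.factorial (d (Sum.inl i))
        else 0 := by
  set e : ℕ → ℕ := fun i => d (Sum.inl i) with he
  set S : Finset ℕ := F.filter (fun i => e i ≠ 0) with hSdef
  have hSF : S ⊆ F := filter_subset _ _
  have heS : ∀ j ∉ S, j ∈ F → e j = 0 := by
    intro j hj hjF
    by_contra h
    exact hj (mem_filter.mpr ⟨hjF, h⟩)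
  have heF : ∀ j ∉ F, e j = 0 := by
    intro j hj
    by_contra h
    exact hj (hF j h)
  rw [MvPowerSeries.coeff_prod]
  -- the canonical-form fact
  have hform : ∀ l ∈ Finset.finsuppAntidiag F d,
      (∏ j ∈ F, MvPowerSeries.coeff (l j) (expVar false j + expVar true j - 1)) ≠ 0 →
      ∀ j, l j = if j ∈ S.filter (fun j' => l j' (Sum.inr true) ≠ 0) then can true j (e j)
                 else if j ∈ F then can false j (e j) else 0 := by
    intro l hl hne j
    obtain ⟨hsum, hsupp⟩ := Finset.mem_finsuppAntidiag.mp hl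
    by_cases hjF : j ∈ F
    · -- the key evaluation: l j (inl j) = e j
      have hfac : ∀ j' ∈ F,
          MvPowerSeries.coeff (l j') (expVar false j' + expVar true j' - 1) ≠ 0 :=
        fun j' hj' => Finset.prod_ne_zero_iff.mp hne j' hj'
      have hkey : l j (Sum.inl j) = e j := by
        have happ : (∑ j' ∈ F, l j') (Sum.inl j) = e j := by rw [hsum]
        rw [Finsupp.finset_sum_apply] at happ
        rw [← happ]
        symm
        apply Finset.sum_eq_single_of_mem j hjF
        intro j' hj' hjj'
        obtain ⟨b, hb⟩ := coeff_factor_ne j' (l j') (hfac j' hj')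
        rw [hb, can_inl_ne _ _ _ _ (Ne.symm hjj')]
      obtain ⟨b, hb⟩ := coeff_factor_ne j (l j) (hfac j hjF)
      rw [hkey] at hb
      by_cases hjA : j ∈ S.filter (fun j' => l j' (Sum.inr true) ≠ 0)
      · rw [if_pos hjA]
        have hjt : l j (Sum.inr true) ≠ 0 := (mem_filter.mp hjA).2
        cases b
        · exfalso
          rw [hb, can_inr_ne _ _ _ _ (by simp)] at hjt
          exact hjt rfl
        · exact hb
      · rw [if_neg hjA, if_pos hjF]
        by_cases hjS : j ∈ S
        · have hjt : l j (Sum.inr true) = 0 := by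
            by_contra hh
            exact hjA (mem_filter.mpr ⟨hjS, hh⟩)
          cases b
          · exact hb
          · exfalso
            rw [hb, can_inr] at hjt
            exact (mem_filter.mp hjS).2 hjt
        · have : e j = 0 := heS j hjS hjF
          rw [hb, this, can_zero, can_zero]
    · have hjS : j ∉ S.filter (fun j' => l j' (Sum.inr true) ≠ 0) := by
        intro hh
        exact hjF (hSF (mem_filter.mp hh).1)
      rw [if_neg hjS, if_neg hjF]
      by_contra hh
      exact hjF (hsupp (Finsupp.mem_support_iff.mpr hh))
  -- sum characterization from the canonical form
  have hsum_iff : ∀ (l : ℕ →₀ ((ℕ ⊕ Bool) →₀ ℕ)) (A : Finset ℕ), A ⊆ S →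
      (∀ j, l j = if j ∈ A then can true j (e j) else if j ∈ F then can false j (e j) else 0) →
      ((∑ j ∈ F, l j = d) ↔
        (∑ i ∈ A, e i = d (Sum.inr true) ∧ ∑ i ∈ S \ A, e i = d (Sum.inr false))) := by
    intro l A hAS hf
    have hterm : ∀ j ∈ F, ∀ x, l j x = (if j ∈ A then can true j (e j) x else can false j (e j) x) := by
      intro j hj x
      rw [hf j]
      split_ifs with h1 h2
      · rfl
      · rfl
    have c1 : ∀ i', (∑ j ∈ F, l j) (Sum.inl i') = d (Sum.inl i') := by
      intro i'
      rw [Finsupp.finset_sum_apply]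
      by_cases hi' : i' ∈ F
      · have h2 : ∑ j ∈ F, l j (Sum.inl i') = l i' (Sum.inl i') := by
          apply Finset.sum_eq_single_of_mem i' hi'
          intro j hj hji
          rw [hterm j hj]
          split_ifs <;> rw [can_inl_ne _ _ _ _ (Ne.symm hji)]
        rw [h2, hterm i' hi']
        split_ifs <;> rw [can_inl]
      · have h2 : ∑ j ∈ F, l j (Sum.inl i') = 0 := by
          apply Finset.sum_eq_zero
          intro j hj
          rw [hterm j hj]
          split_ifs <;> rw [can_inl_ne _ _ _ _ (fun hh => hi' (by rw [hh]; exact hj))]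
        rw [h2]
        exact (heF i' hi').symm
    have c2 : (∑ j ∈ F, l j) (Sum.inr true) = ∑ i ∈ A, e i := by
      rw [Finsupp.finset_sum_apply]
      have h2 : ∀ j ∈ F, l j (Sum.inr true) = if j ∈ A then e j else 0 := by
        intro j hj
        rw [hterm j hj]
        split_ifs
        · rw [can_inr]
        · rw [can_inr_ne _ _ _ _ (by simp)]
      rw [Finset.sum_congr rfl h2, Finset.sum_ite_mem,
        Finset.inter_eq_right.mpr (hAS.trans hSF)]
    have c3 : (∑ j ∈ F, l j) (Sum.inr false) = ∑ i ∈ S \ A, e i := by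
      rw [Finsupp.finset_sum_apply]
      have h2 : ∀ j ∈ F, l j (Sum.inr false) = if j ∈ F \ A then e j else 0 := by
        intro j hj
        rw [hterm j hj]
        by_cases hjA : j ∈ A
        · rw [if_pos hjA, can_inr_ne _ _ _ _ (by simp), if_neg (by simp [hjA])]
        · rw [if_neg hjA, can_inr, if_pos (Finset.mem_sdiff.mpr ⟨hj, hjA⟩)]
      rw [Finset.sum_congr rfl h2, Finset.sum_ite_mem,
        Finset.inter_eq_right.mpr (Finset.sdiff_subset)]
      symm
      apply Finset.sum_subset (Finset.sdiff_subset_sdiff hSF (le_refl A))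
      intro j hj hjS
      rw [Finset.mem_sdiff] at hj hjS
      by_cases hjS2 : j ∈ S
      · exact absurd (⟨hjS2, hj.2⟩ : _ ∧ _) (by simpa using hjS)
      · exact heS j hjS2 hj.1
    constructor
    · intro hsum
      constructor
      · rw [← c2, hsum]
      · rw [← c3, hsum]
    · rintro ⟨h1, h2⟩
      ext x
      rcases x with i' | b'
      · exact c1 i'
      · cases b'
        · rw [c3, h2]
        · rw [c2, h1]
  -- product evaluation from the canonical form
  have hprod_val : ∀ (l : ℕ →₀ ((ℕ ⊕ Bool) →₀ ℕ)) (A : Finset ℕ), A ⊆ S →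
      (∀ j, l j = if j ∈ A then can true j (e j) else if j ∈ F then can false j (e j) else 0) →
      ∏ j ∈ F, MvPowerSeries.coeff (l j) (expVar false j + expVar true j - 1)
        = ∏ j ∈ S, (1 : ℚ) / Nat.factorial (e j) := by
    intro l A hAS hf
    have h2 : ∀ j ∈ F,
        MvPowerSeries.coeff (l j) (expVar false j + expVar true j - 1)
          = (1 : ℚ) / Nat.factorial (e j) := by
      intro j hj
      rw [hf j]
      split_ifs with h1 h2
      · rw [coeff_can]
      · rw [coeff_can]
    rw [Finset.prod_congr rfl h2]
    symm
    apply Finset.prod_subset hSF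
    intro j hj hjS
    rw [heS j hjS hj]
    norm_num
  -- now the bijection
  refine Finset.sum_bij_ne_zero
    (fun l _ _ => S.filter (fun j' => l j' (Sum.inr true) ≠ 0)) ?_ ?_ ?_ ?_
  · intro l h1 h2
    exact mem_powerset.mpr (filter_subset _ _)
  · intro l1 h11 h12 l2 h21 h22 heq
    have heq' : S.filter (fun j' => l1 j' (Sum.inr true) ≠ 0)
        = S.filter (fun j' => l2 j' (Sum.inr true) ≠ 0) := heq
    ext j x
    rw [hform l1 h11 h12 j, hform l2 h21 h22 j, heq']
  · -- surjectivity
    intro A hA hgA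
    have hAS : A ⊆ S := mem_powerset.mp hA
    have hcond : ∑ i ∈ A, e i = d (Sum.inr true) ∧ ∑ i ∈ S \ A, e i = d (Sum.inr false) := by
      by_contra hc
      exact hgA (if_neg hc)
    set lA : ℕ →₀ ((ℕ ⊕ Bool) →₀ ℕ) := Finsupp.onFinset S
      (fun j => if j ∈ A then can true j (e j) else if j ∈ S then can false j (e j) else 0)
      (fun j hj => by
        by_contra h2
        apply hj
        show (if j ∈ A then can true j (e j)
          else if j ∈ S then can false j (e j) else 0) = 0
        rw [if_neg (fun h1 => h2 (hAS h1)), if_neg h2]) with hlA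
    have hfA : ∀ j, lA j = if j ∈ A then can true j (e j)
        else if j ∈ F then can false j (e j) else 0 := by
      intro j
      show (if j ∈ A then can true j (e j) else if j ∈ S then can false j (e j) else 0) = _
      by_cases h1 : j ∈ A
      · rw [if_pos h1, if_pos h1]
      · rw [if_neg h1, if_neg h1]
        by_cases h2 : j ∈ S
        · rw [if_pos h2, if_pos (hSF h2)]
        · rw [if_neg h2]
          by_cases h3 : j ∈ F
          · rw [if_pos h3, heS j h2 h3, can_zero]
          · rw [if_neg h3]
    have hmem : lA ∈ Finset.finsuppAntidiag F d := by
      rw [Finset.mem_finsuppAntidiag]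
      constructor
      · exact (hsum_iff lA A hAS hfA).mpr hcond
      · exact (Finsupp.support_onFinset_subset).trans hSF
    have hne : (∏ j ∈ F, MvPowerSeries.coeff (lA j)
        (expVar false j + expVar true j - 1)) ≠ 0 := by
      rw [hprod_val lA A hAS hfA]
      apply Finset.prod_ne_zero_iff.mpr
      intro j _
      apply one_div_ne_zero
      exact_mod_cast Nat.factorial_ne_zero (e j)
    refine ⟨lA, hmem, hne, ?_⟩
    show S.filter (fun j' => lA j' (Sum.inr true) ≠ 0) = A
    ext j
    rw [mem_filter]
    constructor
    · rintro ⟨hjS, hj⟩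
      by_contra hjA
      rw [hfA j, if_neg hjA, if_pos (hSF hjS), can_inr_ne _ _ _ _ (by simp)] at hj
      exact hj rfl
    · intro hjA
      refine ⟨hAS hjA, ?_⟩
      rw [hfA j, if_pos hjA, can_inr]
      exact (mem_filter.mp (hAS hjA)).2
  · -- values agree
    intro l h1 h2
    show (∏ j ∈ F, MvPowerSeries.coeff (l j) (expVar false j + expVar true j - 1))
      = if (∑ i ∈ S.filter (fun j' => l j' (Sum.inr true) ≠ 0), e i = d (Sum.inr true)
            ∧ ∑ i ∈ S \ S.filter (fun j' => l j' (Sum.inr true) ≠ 0), e i = d (Sum.inr false))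
        then ∏ i ∈ S, (1 : ℚ) / Nat.factorial (e i) else 0
    have hAS : S.filter (fun j' => l j' (Sum.inr true) ≠ 0) ⊆ S := filter_subset _ _
    have hf := hform l h1 h2
    have hsum : ∑ j ∈ F, l j = d := (Finset.mem_finsuppAntidiag.mp h1).1
    have hcond := (hsum_iff l _ hAS hf).mp hsum
    rw [if_pos hcond]
    exact hprod_val l _ hAS hf

/-- The coefficientwise form of the exponential generating function identity
`Σ_{n,m≥0} X_{K_{n,m}} s^n/n! t^m/m! = ∏_{i} (e^{s x_i} + e^{t x_i} − 1)`:
for every monomial `d` and every finite set `F` of indices containing all the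
`x`-variables occurring in `d`, the coefficient of `d` in the finite product
`∏_{i ∈ F} (e^{s x_i} + e^{t x_i} − 1)` (which is independent of such `F`,
since omitted factors have constant term `1`, and hence computes the infinite
product) equals the coefficient of `d` in the left-hand side, namely the
coefficient of the `x`-part of `d` in `X_{K_{n,m}}` divided by `n! m!`, where
`n` and `m` are the exponents of `s` and `t` in `d`. -/
theorem stmt16 (d : (ℕ ⊕ Bool) →₀ ℕ) (F : Finset ℕ)
    (hF : ∀ i : ℕ, d (Sum.inl i) ≠ 0 → i ∈ F) :
    MvPowerSeries.coeff d (∏ i ∈ F, (expVar false i + expVar true i - 1)) =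
      MvPowerSeries.coeff (Finsupp.comapDomain Sum.inl d Sum.inl_injective.injOn)
          (chromSym (completeBipartiteGraph (Fin (d (Sum.inr false)))
            (Fin (d (Sum.inr true))))) /
        (Nat.factorial (d (Sum.inr false)) * Nat.factorial (d (Sum.inr true))) := by
  classical
  rw [coeff_prod_expand d F hF]
  set e : ℕ → ℕ := fun i => d (Sum.inl i) with he
  set S : Finset ℕ := F.filter (fun i => e i ≠ 0) with hSdef
  have hSmem : ∀ i, i ∈ S ↔ e i ≠ 0 := by
    intro i
    rw [hSdef, mem_filter]
    constructor
    · rintro ⟨-, h⟩; exact h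
    · intro h; exact ⟨hF i h, h⟩
  have heS : ∀ i ∉ S, e i = 0 := by
    intro i hi
    by_contra h
    exact hi ((hSmem i).mpr h)
  have hR : MvPowerSeries.coeff (Finsupp.comapDomain Sum.inl d Sum.inl_injective.injOn)
      (chromSym (completeBipartiteGraph (Fin (d (Sum.inr false))) (Fin (d (Sum.inr true)))))
    = ((Nat.card {κ : Fin (d (Sum.inr false)) ⊕ Fin (d (Sum.inr true)) → ℕ //
        (∀ v w, (completeBipartiteGraph (Fin (d (Sum.inr false)))
            (Fin (d (Sum.inr true)))).Adj v w → κ v ≠ κ w) ∧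
        ∀ i, Nat.card {v : Fin (d (Sum.inr false)) ⊕ Fin (d (Sum.inr true)) // κ v = i}
          = e i} : ℕ) : ℚ) := rfl
  rw [hR, card_bipartite (d (Sum.inr false)) (d (Sum.inr true)) e S hSmem]
  rw [Nat.cast_sum]
  have hfac_ne : ((Nat.factorial (d (Sum.inr false)) : ℚ) * (Nat.factorial (d (Sum.inr true)) : ℚ))
      ≠ 0 := by
    have b1 : ((Nat.factorial (d (Sum.inr false)) : ℕ) : ℚ) ≠ 0 := by
      exact_mod_cast Nat.factorial_ne_zero _
    have b2 : ((Nat.factorial (d (Sum.inr true)) : ℕ) : ℚ) ≠ 0 := by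
      exact_mod_cast Nat.factorial_ne_zero _
    exact mul_ne_zero b1 b2
  rw [eq_div_iff hfac_ne, Finset.sum_mul]
  apply Finset.sum_congr rfl
  intro A hA
  have hAS : A ⊆ S := mem_powerset.mp hA
  have prodinv : ∀ (T : Finset ℕ),
      (∏ i ∈ T, (1 : ℚ) / (Nat.factorial (e i))) * ∏ i ∈ T, ((Nat.factorial (e i) : ℕ) : ℚ)
        = 1 := by
    intro T
    rw [← Finset.prod_mul_distrib]
    apply Finset.prod_eq_one
    intro i _
    rw [one_div_mul_cancel]
    exact_mod_cast Nat.factorial_ne_zero _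
  by_cases hcond : ∑ i ∈ A, e i = d (Sum.inr true) ∧ ∑ i ∈ S \ A, e i = d (Sum.inr false)
  · rw [if_pos hcond]
    have h1 : Nat.card {κ₁ : Fin (d (Sum.inr false)) → ℕ //
          ∀ i, Nat.card {v : Fin (d (Sum.inr false)) // κ₁ v = i} = if i ∈ A then 0 else e i}
        * ∏ i ∈ S \ A, Nat.factorial (if i ∈ A then 0 else e i)
        = Nat.factorial (d (Sum.inr false)) := by
      have := card_fibered (S \ A) (Fin (d (Sum.inr false)))
        (fun i => if i ∈ A then 0 else e i)
        (fun i hi => by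
          show (if i ∈ A then 0 else e i) = 0
          by_cases hiA : i ∈ A
          · rw [if_pos hiA]
          · rw [if_neg hiA]
            apply heS
            intro hiS
            exact hi (Finset.mem_sdiff.mpr ⟨hiS, hiA⟩))
        (by
          rw [Fintype.card_fin, ← hcond.2]
          apply Finset.sum_congr rfl
          intro i hi
          show (if i ∈ A then 0 else e i) = e i
          rw [if_neg (Finset.mem_sdiff.mp hi).2])
      rwa [Fintype.card_fin] at this
    have h2 : Nat.card {κ₂ : Fin (d (Sum.inr true)) → ℕ //
          ∀ i, Nat.card {v : Fin (d (Sum.inr true)) // κ₂ v = i} = if i ∈ A then e i else 0}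
        * ∏ i ∈ A, Nat.factorial (if i ∈ A then e i else 0)
        = Nat.factorial (d (Sum.inr true)) := by
      have := card_fibered A (Fin (d (Sum.inr true)))
        (fun i => if i ∈ A then e i else 0)
        (fun i hi => if_neg hi)
        (by
          rw [Fintype.card_fin, ← hcond.1]
          apply Finset.sum_congr rfl
          intro i hi
          show (if i ∈ A then e i else 0) = e i
          rw [if_pos hi])
      rwa [Fintype.card_fin] at this
    have h1' : ((Nat.card {κ₁ : Fin (d (Sum.inr false)) → ℕ //
          ∀ i, Nat.card {v : Fin (d (Sum.inr false)) // κ₁ v = i} = if i ∈ A then 0 else e i} : ℕ)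
          : ℚ) * ∏ i ∈ S \ A, ((Nat.factorial (e i) : ℕ) : ℚ)
        = ((Nat.factorial (d (Sum.inr false)) : ℕ) : ℚ) := by
      rw [← h1]
      push_cast
      congr 1
      apply Finset.prod_congr rfl
      intro i hi
      rw [if_neg (Finset.mem_sdiff.mp hi).2]
    have h2' : ((Nat.card {κ₂ : Fin (d (Sum.inr true)) → ℕ //
          ∀ i, Nat.card {v : Fin (d (Sum.inr true)) // κ₂ v = i} = if i ∈ A then e i else 0} : ℕ)
          : ℚ) * ∏ i ∈ A, ((Nat.factorial (e i) : ℕ) : ℚ)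
        = ((Nat.factorial (d (Sum.inr true)) : ℕ) : ℚ) := by
      rw [← h2]
      push_cast
      congr 1
      apply Finset.prod_congr rfl
      intro i hi
      rw [if_pos hi]
    rw [← Finset.prod_sdiff hAS]
    push_cast
    calc ((∏ i ∈ S \ A, (1:ℚ) / (Nat.factorial (e i)))
            * ∏ i ∈ A, (1:ℚ) / (Nat.factorial (e i)))
          * ((Nat.factorial (d (Sum.inr false)) : ℚ) * (Nat.factorial (d (Sum.inr true)) : ℚ))
        = ((∏ i ∈ S \ A, (1:ℚ) / (Nat.factorial (e i)))
            * (Nat.factorial (d (Sum.inr false)) : ℚ))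
          * ((∏ i ∈ A, (1:ℚ) / (Nat.factorial (e i)))
            * (Nat.factorial (d (Sum.inr true)) : ℚ)) := by ring
      _ = _ := by
          rw [← h1', ← h2']
          calc (∏ i ∈ S \ A, (1:ℚ) / (Nat.factorial (e i)))
                * (↑(Nat.card {κ₁ : Fin (d (Sum.inr false)) → ℕ //
                  ∀ i, Nat.card {v : Fin (d (Sum.inr false)) // κ₁ v = i}
                    = if i ∈ A then 0 else e i})
                  * ∏ i ∈ S \ A, ((Nat.factorial (e i) : ℕ) : ℚ))
                * ((∏ i ∈ A, (1:ℚ) / (Nat.factorial (e i)))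
                * (↑(Nat.card {κ₂ : Fin (d (Sum.inr true)) → ℕ //
                  ∀ i, Nat.card {v : Fin (d (Sum.inr true)) // κ₂ v = i}
                    = if i ∈ A then e i else 0})
                  * ∏ i ∈ A, ((Nat.factorial (e i) : ℕ) : ℚ)))
              = ↑(Nat.card {κ₁ : Fin (d (Sum.inr false)) → ℕ //
                  ∀ i, Nat.card {v : Fin (d (Sum.inr false)) // κ₁ v = i}
                    = if i ∈ A then 0 else e i})
                * ↑(Nat.card {κ₂ : Fin (d (Sum.inr true)) → ℕ //
                  ∀ i, Nat.card {v : Fin (d (Sum.inr true)) // κ₂ v = i}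
                    = if i ∈ A then e i else 0})
                * ((∏ i ∈ S \ A, (1:ℚ) / (Nat.factorial (e i)))
                    * ∏ i ∈ S \ A, ((Nat.factorial (e i) : ℕ) : ℚ))
                * ((∏ i ∈ A, (1:ℚ) / (Nat.factorial (e i)))
                    * ∏ i ∈ A, ((Nat.factorial (e i) : ℕ) : ℚ)) := by ring
            _ = _ := by
                rw [prodinv (S \ A), prodinv A, mul_one, mul_one]
  · rw [if_neg hcond, zero_mul]
    symm
    rw [not_and_or] at hcond
    rcases hcond with hc | hc
    · have : Nat.card {κ₂ : Fin (d (Sum.inr true)) → ℕ //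
          ∀ i, Nat.card {v : Fin (d (Sum.inr true)) // κ₂ v = i} = if i ∈ A then e i else 0}
          = 0 := by
        apply card_fibered_zero _ _ A (fun i hi => if_neg hi)
        rw [Fintype.card_fin]
        intro hh
        apply hc
        rw [← hh]
        apply Finset.sum_congr rfl
        intro i hi
        show e i = if i ∈ A then e i else 0
        rw [if_pos hi]
      rw [this]
      push_cast
      ring
    · have : Nat.card {κ₁ : Fin (d (Sum.inr false)) → ℕ //
          ∀ i, Nat.card {v : Fin (d (Sum.inr false)) // κ₁ v = i} = if i ∈ A then 0 else e i}
          = 0 := by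
        apply card_fibered_zero _ _ (S \ A) (fun i hi => by
          show (if i ∈ A then 0 else e i) = 0
          by_cases hiA : i ∈ A
          · rw [if_pos hiA]
          · rw [if_neg hiA]
            apply heS
            intro hiS
            exact hi (Finset.mem_sdiff.mpr ⟨hiS, hiA⟩))
        rw [Fintype.card_fin]
        intro hh
        apply hc
        rw [← hh]
        apply Finset.sum_congr rfl
        intro i hi
        show e i = if i ∈ A then 0 else e i
        rw [if_neg (Finset.mem_sdiff.mp hi).2]
      rw [this]
      push_cast
      ring
end

section
/- The excedance set statistic satisfies the recursion [u b a v] = [u a b v] + [u a v] + [u b v] for all ab-words u and v. -/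
open Finset

/-- In an `ab`-word we encode the letter `a` as `false` and the letter `b` as `true`. -/
abbrev Letter := Bool

namespace ExHelp

open Equiv

variable {n : ℕ}

/-- Insert: given `σ : Perm (Fin n)`, the permutation of `Fin (n+1)` sending `p ↦ q`
and `p.succAbove j ↦ q.succAbove (σ j)`. -/
def insPerm (p q : Fin (n + 1)) (σ : Perm (Fin n)) : Perm (Fin (n + 1)) :=
  ((finSuccEquiv' p).trans σ.optionCongr).trans (finSuccEquiv' q).symm

@[simp] lemma insPerm_at (p q : Fin (n + 1)) (σ : Perm (Fin n)) : insPerm p q σ p = q := by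
  simp [insPerm]

@[simp] lemma insPerm_succAbove (p q : Fin (n + 1)) (σ : Perm (Fin n)) (j : Fin n) :
    insPerm p q σ (p.succAbove j) = q.succAbove (σ j) := by
  simp [insPerm]

/-- Delete: remove the point `p` (with value `q = π p`) from a permutation. -/
def delPerm (p q : Fin (n + 1)) (π : Perm (Fin (n + 1))) : Perm (Fin n) :=
  Equiv.removeNone (((finSuccEquiv' p).symm.trans π).trans (finSuccEquiv' q))

lemma delPerm_spec (p q : Fin (n + 1)) (π : Perm (Fin (n + 1))) (h : π p = q) (j : Fin n) :
    π (p.succAbove j) = q.succAbove (delPerm p q π j) := by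
  have hne : π (p.succAbove j) ≠ q := by
    rw [← h]
    intro hc
    exact Fin.succAbove_ne p j (π.injective hc)
  have hex : ∃ x', (((finSuccEquiv' p).symm.trans π).trans (finSuccEquiv' q)) (some j) = some x' := by
    simp only [Equiv.trans_apply, finSuccEquiv'_symm_some]
    rcases Option.ne_none_iff_exists'.mp (show finSuccEquiv' q (π (p.succAbove j)) ≠ none by
      intro hc
      apply hne
      exact (finSuccEquiv' q).injective (hc.trans (finSuccEquiv'_at q).symm)) with ⟨x, hx⟩
    exact ⟨x, hx⟩
  have h1 := Equiv.removeNone_some _ hex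
  rw [Equiv.trans_apply, Equiv.trans_apply, finSuccEquiv'_symm_some] at h1
  have h2 := congrArg (finSuccEquiv' q).symm h1
  rw [Equiv.symm_apply_apply, finSuccEquiv'_symm_some] at h2
  exact h2.symm ▸ rfl

/-- Deleting a prescribed point is a bijection. -/
def delEquiv (p q : Fin (n + 1)) :
    {π : Perm (Fin (n + 1)) // π p = q} ≃ Perm (Fin n) where
  toFun π := delPerm p q π.1
  invFun σ := ⟨insPerm p q σ, insPerm_at p q σ⟩
  left_inv := by
    rintro ⟨π, h⟩
    refine Subtype.ext (Equiv.ext fun x => ?_)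
    refine Fin.succAboveCases p ?_ (fun j => ?_) x
    · rw [insPerm_at, h]
    · rw [insPerm_succAbove, ← delPerm_spec p q π h j]
  right_inv := by
    intro σ
    refine Equiv.ext fun j => ?_
    have h1 : insPerm p q σ p = q := insPerm_at p q σ
    have h2 := delPerm_spec p q (insPerm p q σ) h1 j
    rw [insPerm_succAbove] at h2
    exact (Fin.succAbove_right_injective h2).symm

/-- The excedance-word condition, for an abstract word. -/
def C {k : ℕ} (w : Fin k → Bool) (π : Perm (Fin (k + 1))) : Prop :=
  ∀ i : Fin k, (w i = true ↔ i.castSucc < π i.castSucc)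

noncomputable def exStat' (k : ℕ) (w : Fin k → Bool) : ℕ :=
  Nat.card {π : Perm (Fin (k + 1)) // C w π}

lemma exStat_eq' (w : List Bool) (k : ℕ) (h : w.length = k) :
    exStat w = exStat' k (fun i : Fin k => w.getD (i : ℕ) false) := by
  subst h
  apply Nat.card_congr
  refine Equiv.subtypeEquivRight fun π => forall_congr' fun i => ?_
  have h' : w.getD (i : ℕ) false = w.get i := by
    rw [List.getD_eq_getElem _ _ i.isLt, List.get_eq_getElem]
  beta_reduce
  rw [h']

lemma master_del {k : ℕ} (w1 : Fin (k + 1) → Bool) (w2 : Fin k → Bool)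
    (p' : Fin (k + 1)) (q : Fin (k + 2)) (π : Perm (Fin (k + 2)))
    (h : π p'.castSucc = q)
    (hw : ∀ j : Fin k, w1 (p'.succAbove j) = w2 j)
    (hcmp : ∀ x y : Fin (k + 1), p'.castSucc.succAbove x < q.succAbove y ↔ x < y)
    (hletter : w1 p' = true ↔ p'.castSucc < q) :
    C w1 π ↔ C w2 (delPerm p'.castSucc q π) := by
  have e1 : ∀ j : Fin k, (p'.succAbove j).castSucc = p'.castSucc.succAbove j.castSucc :=
    fun j => Fin.castSucc_succAbove_castSucc.symm
  have e2 : ∀ j : Fin k, π (p'.castSucc.succAbove j.castSucc) =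
      q.succAbove (delPerm p'.castSucc q π j.castSucc) :=
    fun j => delPerm_spec _ _ _ h _
  constructor
  · intro hC j
    have h1 := hC (p'.succAbove j)
    rw [hw j, e1 j, e2 j, hcmp] at h1
    exact h1
  · intro hC i
    refine Fin.succAboveCases p' ?_ (fun j => ?_) i
    · rw [h]; exact hletter
    · rw [hw j, e1 j, e2 j, hcmp]; exact hC j

lemma card_del {k : ℕ} (w1 : Fin (k + 1) → Bool) (w2 : Fin k → Bool)
    (p' : Fin (k + 1)) (q : Fin (k + 2))
    (hw : ∀ j : Fin k, w1 (p'.succAbove j) = w2 j)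
    (hcmp : ∀ x y : Fin (k + 1), p'.castSucc.succAbove x < q.succAbove y ↔ x < y)
    (hletter : w1 p' = true ↔ p'.castSucc < q) :
    Nat.card {π : Perm (Fin (k + 2)) // C w1 π ∧ π p'.castSucc = q}
      = Nat.card {σ : Perm (Fin (k + 1)) // C w2 σ} := by
  apply Nat.card_congr
  refine (Equiv.subtypeEquivRight (fun π => and_comm)).trans ?_
  refine ((Equiv.subtypeSubtypeEquivSubtypeInter
    (fun π : Perm (Fin (k + 2)) => π p'.castSucc = q) (C w1)).symm).trans ?_
  exact (delEquiv p'.castSucc q).subtypeEquiv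
    (fun x => master_del w1 w2 p' q x.1 x.2 hw hcmp hletter)

lemma card_split {α : Type*} [Finite α] (P Q : α → Prop) :
    Nat.card {x // P x} = Nat.card {x // P x ∧ Q x} + Nat.card {x // P x ∧ ¬Q x} := by
  classical
  have e : {x // P x ∧ Q x} ⊕ {x // P x ∧ ¬Q x} ≃ {x // P x} :=
    (Equiv.sumCongr (Equiv.subtypeSubtypeEquivSubtypeInter P Q).symm
      (Equiv.subtypeSubtypeEquivSubtypeInter P (fun x => ¬Q x)).symm).trans
      (Equiv.sumCompl _)
  rw [← Nat.card_congr e, Nat.card_sum]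

lemma master_swap {k : ℕ} (w1 w2 : Fin (k + 1) → Bool) (t : Fin k)
    (h1t : w1 t.castSucc = true) (h1s : w1 t.succ = false)
    (h2t : w2 t.castSucc = false) (h2s : w2 t.succ = true)
    (hoth : ∀ i : Fin (k + 1), i ≠ t.castSucc → i ≠ t.succ → w1 i = w2 i)
    (π : Perm (Fin (k + 2))) :
    (C w1 π ∧ ¬ π t.succ.castSucc = t.succ.castSucc ∧ ¬ π t.castSucc.castSucc = t.succ.castSucc)
      ↔ C w2 (π * Equiv.swap t.castSucc.castSucc t.succ.castSucc) := by
  set A := t.castSucc.castSucc with hA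
  set B := t.succ.castSucc with hB
  have hvA : (A : ℕ) = t.1 := by simp [hA]
  have hvB : (B : ℕ) = t.1 + 1 := by simp [hB]
  have sA : (π * Equiv.swap A B) A = π B := by simp [Equiv.Perm.mul_apply]
  have sB : (π * Equiv.swap A B) B = π A := by simp [Equiv.Perm.mul_apply]
  have sO : ∀ i : Fin (k + 1), i ≠ t.castSucc → i ≠ t.succ →
      (π * Equiv.swap A B) i.castSucc = π i.castSucc := by
    intro i hi1 hi2
    rw [Equiv.Perm.mul_apply, Equiv.swap_apply_of_ne_of_ne]
    · exact fun hc => hi1 (by simpa [hA, Fin.ext_iff] using congrArg Fin.val hc)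
    · exact fun hc => hi2 (by simpa [hB, Fin.ext_iff] using congrArg Fin.val hc)
  constructor
  · rintro ⟨hC, hPB, hPA⟩ i
    have hCt := hC t.castSucc
    rw [h1t] at hCt
    have hAlt : (A : ℕ) < π A := Fin.lt_def.mp (hCt.mp rfl)
    have hCs := hC t.succ
    rw [h1s] at hCs
    have hBle : ¬ ((B : ℕ) < π B) := fun hc => by simpa using hCs.mpr (Fin.lt_def.mpr hc)
    have hPBv : ((π B : Fin (k + 2)) : ℕ) ≠ (B : ℕ) := fun hc => hPB (Fin.ext hc)
    have hPAv : ((π A : Fin (k + 2)) : ℕ) ≠ (B : ℕ) := fun hc => hPA (Fin.ext hc)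
    rcases eq_or_ne i t.castSucc with rfl | hi1
    · rw [h2t, show (t.castSucc).castSucc = A from rfl, sA, Fin.lt_def]
      simp only [Bool.false_eq_true, false_iff]
      omega
    · rcases eq_or_ne i t.succ with rfl | hi2
      · rw [h2s, show (t.succ).castSucc = B from rfl, sB, Fin.lt_def]
        simp only [true_iff]
        omega
      · rw [← hoth i hi1 hi2, sO i hi1 hi2]
        exact hC i
  · intro hC2
    have hCt2 := hC2 t.castSucc
    rw [h2t, show (t.castSucc).castSucc = A from rfl, sA] at hCt2
    have hble : ¬ ((A : ℕ) < π B) := fun hc => by simpa using hCt2.mpr (Fin.lt_def.mpr hc)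
    have hCs2 := hC2 t.succ
    rw [h2s, show (t.succ).castSucc = B from rfl, sB] at hCs2
    have halt : (B : ℕ) < π A := Fin.lt_def.mp (hCs2.mp rfl)
    refine ⟨?_, ?_, ?_⟩
    · intro i
      rcases eq_or_ne i t.castSucc with rfl | hi1
      · rw [h1t, show (t.castSucc).castSucc = A from rfl, Fin.lt_def]
        simp only [true_iff]
        omega
      · rcases eq_or_ne i t.succ with rfl | hi2
        · rw [h1s, show (t.succ).castSucc = B from rfl, Fin.lt_def]
          simp only [Bool.false_eq_true, false_iff]
          omega
        · rw [hoth i hi1 hi2, ← sO i hi1 hi2]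
          exact hC2 i
    · intro hc
      rw [hc] at hble
      omega
    · intro hc
      rw [hc] at halt
      omega

lemma val_succAbove {k : ℕ} (p : Fin (k + 1)) (x : Fin k) :
    ((p.succAbove x : Fin (k + 1)) : ℕ) =
      if (x : ℕ) < (p : ℕ) then (x : ℕ) else (x : ℕ) + 1 := by
  rcases lt_or_ge (x.castSucc) p with h | h
  · rw [Fin.succAbove_of_castSucc_lt p x h, if_pos (by simpa [Fin.lt_def] using h)]
    simp
  · rw [Fin.succAbove_of_le_castSucc p x h, if_neg (by simpa [Fin.le_def, not_lt] using h)]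
    simp

lemma succAbove_lt_succAbove_adj {k : ℕ} (p q : Fin (k + 2)) (hq : (q : ℕ) = (p : ℕ) + 1)
    (x y : Fin (k + 1)) : p.succAbove x < q.succAbove y ↔ x < y := by
  rw [Fin.lt_def, Fin.lt_def, val_succAbove, val_succAbove, hq]
  split_ifs <;> omega

lemma getD_app2 (u v : List Bool) (a b : Bool) (i : ℕ) :
    (u ++ a :: b :: v).getD i false =
      if i < u.length then u.getD i false
      else if i = u.length then a
      else if i = u.length + 1 then b
      else v.getD (i - u.length - 2) false := by
  split_ifs with hlt he1 he2
  · exact List.getD_append _ _ _ _ hlt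
  · subst he1
    rw [List.getD_append_right _ _ _ _ le_rfl]
    simp
  · subst he2
    rw [List.getD_append_right _ _ _ _ (by omega)]
    rw [show u.length + 1 - u.length = 1 from by omega]
    rfl
  · rw [List.getD_append_right _ _ _ _ (by omega)]
    rw [show i - u.length = (i - u.length - 2) + 2 from by omega]
    rfl

lemma getD_app1 (u v : List Bool) (a : Bool) (i : ℕ) :
    (u ++ a :: v).getD i false =
      if i < u.length then u.getD i false
      else if i = u.length then a
      else v.getD (i - u.length - 1) false := by
  split_ifs with hlt he1
  · exact List.getD_append _ _ _ _ hlt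
  · subst he1
    rw [List.getD_append_right _ _ _ _ le_rfl]
    simp
  · rw [List.getD_append_right _ _ _ _ (by omega)]
    rw [show i - u.length = (i - u.length - 1) + 1 from by omega]
    rfl

lemma getD_congr (l : List Bool) {x y : ℕ} (h : x = y) :
    l.getD x false = l.getD y false := by rw [h]

end ExHelp

/-- The excedance set statistic satisfies the recursion
`[u b a v] = [u a b v] + [u a v] + [u b v]`. -/
theorem stmt18 (u v : List Bool) :
    exStat (u ++ true :: false :: v) =
      exStat (u ++ false :: true :: v) + exStat (u ++ false :: v) +
        exStat (u ++ true :: v) := by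
  classical
  open ExHelp Equiv in
  set K := u.length + v.length + 1 with hKdef
  have h₁ : (u ++ true :: false :: v).length = K + 1 := by simp [hKdef]; omega
  have h₂ : (u ++ false :: true :: v).length = K + 1 := by simp [hKdef]; omega
  have h₃ : (u ++ false :: v).length = K := by simp [hKdef]; omega
  have h₄ : (u ++ true :: v).length = K := by simp [hKdef]; omega
  set W1 : Fin (K + 1) → Bool := fun i => (u ++ true :: false :: v).getD (i : ℕ) false with hW1
  set W2 : Fin (K + 1) → Bool := fun i => (u ++ false :: true :: v).getD (i : ℕ) false with hW2
  set W3 : Fin K → Bool := fun i => (u ++ false :: v).getD (i : ℕ) false with hW3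
  set W4 : Fin K → Bool := fun i => (u ++ true :: v).getD (i : ℕ) false with hW4
  have E1 : exStat (u ++ true :: false :: v) = exStat' (K + 1) W1 := exStat_eq' _ _ h₁
  have E2 : exStat (u ++ false :: true :: v) = exStat' (K + 1) W2 := exStat_eq' _ _ h₂
  have E3 : exStat (u ++ false :: v) = exStat' K W3 := exStat_eq' _ _ h₃
  have E4 : exStat (u ++ true :: v) = exStat' K W4 := exStat_eq' _ _ h₄
  rw [E1, E2, E3, E4]
  set t : Fin K := ⟨u.length, by omega⟩ with ht
  set A : Fin (K + 2) := t.castSucc.castSucc with hA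
  set B : Fin (K + 2) := t.succ.castSucc with hB
  -- values of the words
  have w1cs : W1 t.castSucc = true := by
    rw [hW1]; simp only []
    rw [getD_app2]
    simp [ht]
  have w1s : W1 t.succ = false := by
    rw [hW1]; simp only []
    rw [getD_app2]
    simp [ht]
  have w2cs : W2 t.castSucc = false := by
    rw [hW2]; simp only []
    rw [getD_app2]
    simp [ht]
  have w2s : W2 t.succ = true := by
    rw [hW2]; simp only []
    rw [getD_app2]
    simp [ht]
  have hoth : ∀ i : Fin (K + 1), i ≠ t.castSucc → i ≠ t.succ → W1 i = W2 i := by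
    intro i hi1 hi2
    have hv1 : (i : ℕ) ≠ u.length := fun hc => hi1 (Fin.ext (by simp [ht, hc]))
    have hv2 : (i : ℕ) ≠ u.length + 1 := fun hc => hi2 (Fin.ext (by simp [ht, hc]))
    rw [hW1, hW2]; simp only []
    rw [getD_app2, getD_app2]
    split_ifs <;> first | rfl | omega
  -- step 1: split off the fixed-point case π B = B
  have step1 : exStat' (K + 1) W1 =
      Nat.card {π : Perm (Fin (K + 2)) // C W1 π ∧ π B = B} +
      Nat.card {π : Perm (Fin (K + 2)) // C W1 π ∧ ¬ π B = B} :=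
    card_split _ _
  have step2 : Nat.card {π : Perm (Fin (K + 2)) // C W1 π ∧ ¬ π B = B} =
      Nat.card {π : Perm (Fin (K + 2)) // (C W1 π ∧ ¬ π B = B) ∧ π A = B} +
      Nat.card {π : Perm (Fin (K + 2)) // (C W1 π ∧ ¬ π B = B) ∧ ¬ π A = B} :=
    card_split _ _
  -- piece 1 : fixed point at position n+1 ↦ word u b v
  have hsuccval : ((t.succ : Fin (K + 1)) : ℕ) = u.length + 1 := by simp [ht]
  have hcsval : ((t.castSucc : Fin (K + 1)) : ℕ) = u.length := by simp [ht]
  have piece1 : Nat.card {π : Perm (Fin (K + 2)) // C W1 π ∧ π B = B} = exStat' K W4 := by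
    refine card_del W1 W4 t.succ B ?_ ?_ ?_
    · intro j
      have hv := val_succAbove t.succ j
      rw [hsuccval] at hv
      rw [hW1, hW4]; simp only []
      rw [getD_app2, getD_app1, hv]
      split_ifs <;>
        first
          | rfl
          | omega
          | exact getD_congr v (by omega)
    · exact fun x y => Fin.succAbove_lt_succAbove_iff
    · rw [w1s]
      simp
      rw [Fin.le_def]; simp [hB]
  have piece2 : Nat.card {π : Perm (Fin (K + 2)) // (C W1 π ∧ ¬ π B = B) ∧ π A = B}
      = exStat' K W3 := by
    have hAB : A ≠ B := by
      intro hc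
      have := congrArg Fin.val hc
      simp [hA, hB, ht] at this
    have reshape : Nat.card {π : Perm (Fin (K + 2)) // (C W1 π ∧ ¬ π B = B) ∧ π A = B}
        = Nat.card {π : Perm (Fin (K + 2)) // C W1 π ∧ π A = B} := by
      apply Nat.card_congr
      refine Equiv.subtypeEquivRight fun π => ?_
      constructor
      · rintro ⟨⟨hc, _⟩, h2⟩; exact ⟨hc, h2⟩
      · rintro ⟨hc, h2⟩
        refine ⟨⟨hc, fun h1 => hAB (π.injective (h2.trans h1.symm))⟩, h2⟩
    rw [reshape]
    refine card_del W1 W3 t.castSucc B ?_ ?_ ?_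
    · intro j
      have hv := val_succAbove t.castSucc j
      rw [hcsval] at hv
      rw [hW1, hW3]; simp only []
      rw [getD_app2, getD_app1, hv]
      split_ifs <;>
        first
          | rfl
          | omega
          | exact getD_congr v (by omega)
    · refine fun x y => succAbove_lt_succAbove_adj _ _ ?_ x y
      simp [hA, hB, ht]
    · rw [w1cs]
      simp only [true_iff]
      rw [Fin.lt_def]
      simp [hA, hB, ht]
  have piece3 : Nat.card {π : Perm (Fin (K + 2)) // (C W1 π ∧ ¬ π B = B) ∧ ¬ π A = B}
      = exStat' (K + 1) W2 := by
    apply Nat.card_congr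
    refine (Equiv.subtypeEquivRight (fun π => ?_)).trans
      ((Equiv.mulRight (Equiv.swap A B)).subtypeEquiv (fun π => Iff.rfl))
    rw [show ((C W1 π ∧ ¬ π B = B) ∧ ¬ π A = B) ↔
        (C W1 π ∧ ¬ π B = B ∧ ¬ π A = B) from and_assoc]
    exact master_swap W1 W2 t w1cs w1s w2cs w2s hoth π
  rw [step1, step2, piece1, piece2, piece3]
  omega
end
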